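/- arXiv:2511.18034 — 6 statements merged into one kernel-verified Lean document; each statement's English description precedes it below -/
import Mathlib

section
/- For integers N ≥ k ≥ 1, the telescoping sum ∑_{n=k+1}^{N} (1+q^n) q^{nk} / ∏_{j=n-k}^{n+k} [j]_q equals (1/[k]_q) ( q^{k(k+1)}/∏_{j=1}^{2k}[j]_q − q^{(N+1)k}/∏_{j=N-k+1}^{N+k}[j]_q ). -/
open Finset

/-- The `q`-analogue of the natural number `n`: `[n]_q = (1 - q^n)/(1 - q)`. -/
noncomputable def qint (q : ℝ) (n : ℕ) : ℝ := (1 - q ^ n) / (1 - q)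

/-- The `q`-factorial `[n]_q! = ∏_{j=1}^n [j]_q`. -/
noncomputable def qfact (q : ℝ) (n : ℕ) : ℝ := ∏ j ∈ Finset.Icc 1 n, qint q j

/-- The Gaussian (`q`-binomial) coefficient `[n]_q!/([k]_q! [n-k]_q!)`. -/
noncomputable def qbinom (q : ℝ) (n k : ℕ) : ℝ := qfact q n / (qfact q k * qfact q (n - k))

/-- The multiple harmonic `q`-sum
`H_{q,k}({2}^s) = ∑_{1 ≤ j₁ < ⋯ < j_s ≤ k} q^(j₁+⋯+j_s)/([j₁]_q² ⋯ [j_s]_q²)`. -/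
noncomputable def qH (q : ℝ) (k s : ℕ) : ℝ :=
  ∑ A ∈ (Finset.Icc 1 k).powersetCard s, ∏ j ∈ A, q ^ j / (qint q j) ^ 2

lemma tele_aux (g : ℕ → ℝ) (k N : ℕ) (h : k ≤ N) :
    ∑ n ∈ Finset.Icc (k+1) N, (g (n-1) - g n) = g k - g N := by
  induction N, h using Nat.le_induction with
  | base => simp
  | succ N hN ih =>
      rw [Finset.sum_Icc_succ_top (by omega), ih]
      simp only [Nat.add_sub_cancel]
      ring

lemma alg_aux (r s A B K M x : ℝ) (hA : A ≠ 0) (hB : B ≠ 0) (hK : K ≠ 0) (hM : M ≠ 0)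
    (key : B - r * A = K * (1 + s)) :
    (1 + s) * x / (A * (M * B)) = 1/K * (x/(A*M) - x * r/(M*B)) := by
  field_simp
  linear_combination (-x) * key

theorem stmt_4 (q : ℝ) (hq : q ≠ 1) (N k : ℕ) (hk : 1 ≤ k) (hkN : k ≤ N)
    (h0 : ∀ j : ℕ, 1 ≤ j → j ≤ N + k → qint q j ≠ 0) :
    ∑ n ∈ Finset.Icc (k + 1) N,
        (1 + q ^ n) * q ^ (n * k) / ∏ j ∈ Finset.Icc (n - k) (n + k), qint q j =
    1 / qint q k *
      (q ^ (k * (k + 1)) / ∏ j ∈ Finset.Icc 1 (2 * k), qint q j -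
        q ^ ((N + 1) * k) / ∏ j ∈ Finset.Icc (N - k + 1) (N + k), qint q j) := by
  have hq1 : (1:ℝ) - q ≠ 0 := sub_ne_zero.mpr (Ne.symm hq)
  have hK : qint q k ≠ 0 := h0 k hk (by omega)
  set g : ℕ → ℝ := fun n => q ^ ((n+1)*k) / ∏ j ∈ Finset.Icc (n-k+1) (n+k), qint q j with hg
  have step : ∀ n ∈ Finset.Icc (k+1) N,
      (1 + q ^ n) * q ^ (n * k) / ∏ j ∈ Finset.Icc (n - k) (n + k), qint q j
      = 1 / qint q k * (g (n-1) - g n) := by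
    intro n hn
    simp only [Finset.mem_Icc] at hn
    obtain ⟨p, rfl⟩ : ∃ p, n = p + 1 + k := ⟨n - 1 - k, by omega⟩
    have e1 : p + 1 + k - k = p + 1 := by omega
    have e2 : p + 1 + k - 1 = p + k := by omega
    have e3 : p + k - k + 1 = p + 1 := by omega
    simp only [hg, e1, e2, e3]
    -- nonzero facts
    have hA : qint q (p+1) ≠ 0 := h0 _ (by omega) (by omega)
    have hB : qint q (p+1+k+k) ≠ 0 := h0 _ (by omega) (by omega)
    have hM : (∏ j ∈ Finset.Icc (p+2) (p+k+k), qint q j) ≠ 0 :=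
      Finset.prod_ne_zero_iff.mpr fun j hj => by
        simp only [Finset.mem_Icc] at hj; exact h0 j (by omega) (by omega)
    -- product splits
    have hbot : ∀ b, p + 1 ≤ b → (∏ j ∈ Finset.Icc (p+1) b, qint q j)
        = qint q (p+1) * ∏ j ∈ Finset.Icc (p+2) b, qint q j := by
      intro b hb
      rw [← Finset.Ico_add_one_right_eq_Icc, Finset.prod_eq_prod_Ico_succ_bot (by omega), Finset.Ico_add_one_right_eq_Icc]
    have hP : (∏ j ∈ Finset.Icc (p+1) (p+1+k+k), qint q j)
        = qint q (p+1) * ((∏ j ∈ Finset.Icc (p+2) (p+k+k), qint q j) * qint q (p+1+k+k)) := by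
      rw [hbot _ (by omega)]
      congr 1
      have h' : p + 1 + k + k = (p + k + k) + 1 := by omega
      rw [h', Finset.prod_Icc_succ_top (by omega)]
    have hP1 : (∏ j ∈ Finset.Icc (p+1) (p+k+k), qint q j)
        = qint q (p+1) * ∏ j ∈ Finset.Icc (p+2) (p+k+k), qint q j := hbot _ (by omega)
    have hP2 : (∏ j ∈ Finset.Icc (p+2) (p+1+k+k), qint q j)
        = (∏ j ∈ Finset.Icc (p+2) (p+k+k), qint q j) * qint q (p+1+k+k) := by
      have h' : p + 1 + k + k = (p + k + k) + 1 := by omega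
      rw [h', Finset.prod_Icc_succ_top (by omega)]
    have key : qint q (p+1+k+k) - q^k * qint q (p+1) = qint q k * (1 + q^(p+1+k)) := by
      simp only [qint, pow_add]
      field_simp
      ring
    rw [hP, hP1, hP2,
      show (p+k+1)*k = (p+1+k)*k from by ring,
      show (p+1+k+1)*k = (p+1+k)*k + k from by ring,
      show q^((p+1+k)*k + k) = q^((p+1+k)*k) * q^k from pow_add q _ _]
    exact alg_aux (q^k) (q^(p+1+k)) _ _ _ _ _ hA hB hK hM key
  rw [Finset.sum_congr rfl step, ← Finset.mul_sum, tele_aux g k N hkN]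
  have egk : g k = q ^ (k * (k + 1)) / ∏ j ∈ Finset.Icc 1 (2 * k), qint q j := by
    simp only [hg]
    rw [show k - k + 1 = 1 from by omega, show k + k = 2 * k from by ring,
      show (k+1)*k = k*(k+1) from by ring]
  have egN : g N = q ^ ((N + 1) * k) / ∏ j ∈ Finset.Icc (N - k + 1) (N + k), qint q j := rfl
  rw [egk, egN]
end

section
/- (Finite q-Markov–Apéry identity) For every positive integer N, ∑_{k=1}^{N} (q^k + q^{2k})/[k]_q^3 = ∑_{k=1}^{N} (-1)^{k-1} q^{C(k+1,2)} (1 + 3q^k + q^{2k}) / ([k]_q^3 · qbinom(2k,k)) − ∑_{k=1}^{N} (-1)^{k-1} q^{-C(k,2)+Nk+k} / ([k]_q^3 · qbinom(N,k) · qbinom(N+k,k)). -/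
open Finset

/-- The tail summand in factorial form. -/
noncomputable def tA (q : ℝ) (n k : ℕ) : ℝ :=
  (-1 : ℝ) ^ (k + 1) * q ^ (((n * k + k : ℕ) : ℤ) - (Nat.choose k 2 : ℤ)) *
    (qfact q k) ^ 2 * qfact q (n - k) / ((qint q k) ^ 3 * qfact q (n + k))

/-- The central binomial summand in factorial form. -/
noncomputable def tS (q : ℝ) (k : ℕ) : ℝ :=
  (-1 : ℝ) ^ (k + 1) * q ^ ((Nat.choose (k + 1) 2 : ℕ) : ℤ) * (1 + 3 * q ^ k + q ^ (2 * k)) *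
    (qfact q k) ^ 2 / ((qint q k) ^ 3 * qfact q (2 * k))

/-- The left-hand summand. -/
noncomputable def tL (q : ℝ) (k : ℕ) : ℝ := (q ^ k + q ^ (2 * k)) / (qint q k) ^ 3

/-- The telescoping certificate. -/
noncomputable def tY (q : ℝ) (n m : ℕ) : ℝ :=
  (-1 : ℝ) ^ m * q ^ (((n * m + n : ℕ) : ℤ) - (Nat.choose m 2 : ℤ) - (m : ℤ)) *
    (1 + q ^ n) * (qfact q m) ^ 2 * qfact q (n - 1 - m) / ((qint q n) ^ 2 * qfact q (n + m))

lemma qfact_zero (q : ℝ) : qfact q 0 = 1 := by simp [qfact]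

lemma qfact_one (q : ℝ) : qfact q 1 = qint q 1 := by simp [qfact]

lemma qfact_succ (q : ℝ) (n : ℕ) : qfact q (n + 1) = qfact q n * qint q (n + 1) := by
  rw [qfact, qfact, Finset.prod_Icc_succ_top (by omega)]

lemma qfact_ne_zero (q : ℝ) (h0 : ∀ j : ℕ, 1 ≤ j → qint q j ≠ 0) (n : ℕ) :
    qfact q n ≠ 0 := by
  induction n with
  | zero => simp [qfact_zero]
  | succ m ih => rw [qfact_succ]; exact mul_ne_zero ih (h0 (m + 1) (by omega))

lemma one_sub_pow_ne_zero (q : ℝ) (h0 : ∀ j : ℕ, 1 ≤ j → qint q j ≠ 0)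
    (i : ℕ) (hi : 1 ≤ i) : (1 : ℝ) - q ^ i ≠ 0 := by
  intro h
  exact h0 i hi (by simp [qint, h])

lemma chs (j : ℕ) : (Nat.choose (j+1) 2 : ℤ) = (Nat.choose j 2 : ℤ) + j := by
  rw [Nat.choose_succ_succ, Nat.choose_one_right]; push_cast; ring

lemma choose2 (m : ℕ) : (Nat.choose m 2 : ℤ) * 2 = m * m - m := by
  induction m with
  | zero => simp
  | succ j ih =>
    rw [Nat.choose_succ_succ, Nat.choose_one_right]
    push_cast
    push_cast at ih
    ring_nf
    ring_nf at ih
    linarith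

lemma step1 (q : ℝ) (hq0 : q ≠ 0) (hq1 : (1 : ℝ) - q ≠ 0)
    (h0 : ∀ j : ℕ, 1 ≤ j → qint q j ≠ 0) (j r : ℕ) :
    tY q (j + r + 2) (j + 1) - tY q (j + r + 2) j
      = tA q (j + r + 2) (j + 1) - tA q (j + r + 1) (j + 1) := by
  have hfac := qfact_ne_zero q h0
  have hpj : (1:ℝ) - q ^ (j+1) ≠ 0 := one_sub_pow_ne_zero q h0 _ (by omega)
  have hpr : (1:ℝ) - q ^ (r+1) ≠ 0 := one_sub_pow_ne_zero q h0 _ (by omega)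
  have hpn : (1:ℝ) - q ^ (j+r+2) ≠ 0 := one_sub_pow_ne_zero q h0 _ (by omega)
  have hpc : (1:ℝ) - q ^ (2*j+r+2+1) ≠ 0 := one_sub_pow_ne_zero q h0 _ (by omega)
  have hfj : qfact q j ≠ 0 := hfac j
  have hfr : qfact q r ≠ 0 := hfac r
  have hfw : qfact q (2*j+r+2) ≠ 0 := hfac _
  rw [tY, tY, tA, tA]
  rw [show (j+r+2) - 1 - (j+1) = r from by omega,
      show (j+r+2) + (j+1) = 2*j+r+2+1 from by omega,
      show (j+r+2) - 1 - j = r+1 from by omega,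
      show (j+r+2) + j = 2*j+r+2 from by omega,
      show (j+r+2) - (j+1) = r+1 from by omega,
      show (j+r+1) - (j+1) = r from by omega,
      show (j+r+1) + (j+1) = 2*j+r+2 from by omega]
  rw [qfact_succ q (2*j+r+2), qfact_succ q j, qfact_succ q r]
  have hEA1 : q ^ ((((j+r+2) * (j+1) + (j+1) : ℕ) : ℤ) - (Nat.choose (j+1) 2 : ℤ))
      = q ^ ((((j+r+1) * (j+1) + (j+1) : ℕ) : ℤ) - (Nat.choose (j+1) 2 : ℤ)) * q ^ (j+1) := by
    rw [← zpow_natCast q (j+1), ← zpow_add₀ hq0]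
    congr 1
    push_cast
    ring
  have hEY1 : q ^ ((((j+r+2) * (j+1) + (j+r+2) : ℕ) : ℤ) - (Nat.choose (j+1) 2 : ℤ) - ((j+1 : ℕ) : ℤ))
      = q ^ ((((j+r+1) * (j+1) + (j+1) : ℕ) : ℤ) - (Nat.choose (j+1) 2 : ℤ)) * q ^ (r+1) := by
    rw [← zpow_natCast q (r+1), ← zpow_add₀ hq0]
    congr 1
    push_cast
    ring
  have hEY0 : q ^ ((((j+r+2) * j + (j+r+2) : ℕ) : ℤ) - (Nat.choose j 2 : ℤ) - ((j : ℕ) : ℤ))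
      = q ^ ((((j+r+1) * (j+1) + (j+1) : ℕ) : ℤ) - (Nat.choose (j+1) 2 : ℤ)) := by
    congr 1
    rw [chs]
    push_cast
    ring
  rw [hEA1, hEY1, hEY0]
  have hP : q ^ ((((j+r+1) * (j+1) + (j+1) : ℕ) : ℤ) - (Nat.choose (j+1) 2 : ℤ)) ≠ 0 :=
    zpow_ne_zero _ hq0
  simp only [qint] at *
  field_simp
  ring

lemma step2a (q : ℝ) (hq0 : q ≠ 0) (hq1 : (1 : ℝ) - q ≠ 0)
    (h0 : ∀ j : ℕ, 1 ≤ j → qint q j ≠ 0) (j : ℕ) :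
    tY q (j + 1) 0 = tL q (j + 1) := by
  have hfac := qfact_ne_zero q h0
  have hint : qint q (j+1) ≠ 0 := h0 _ (by omega)
  rw [tY, tL]
  rw [show (j+1) - 1 - 0 = j from by omega, show (j+1) + 0 = j + 1 from by omega]
  rw [qfact_succ]
  rw [show ((((j+1) * 0 + (j+1) : ℕ) : ℤ) - (Nat.choose 0 2 : ℤ) - ((0:ℕ) : ℤ)) = ((j+1 : ℕ) : ℤ)
    from by simp]
  rw [zpow_natCast]
  rw [show 2 * (j+1) = (j+1) + (j+1) from by ring, pow_add]
  simp only [qfact_zero, pow_zero, one_pow, one_mul, mul_one]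
  rw [div_eq_div_iff (mul_ne_zero (pow_ne_zero _ hint) (mul_ne_zero (hfac j) hint))
    (pow_ne_zero _ hint)]
  ring

lemma step2b (q : ℝ) (hq0 : q ≠ 0) (hq1 : (1 : ℝ) - q ≠ 0)
    (h0 : ∀ j : ℕ, 1 ≤ j → qint q j ≠ 0) (j : ℕ) :
    tY q (j + 1) j = tS q (j + 1) - tA q (j + 1) (j + 1) := by
  have hfac := qfact_ne_zero q h0
  have hp1 : (1:ℝ) - q ^ (j+1) ≠ 0 := one_sub_pow_ne_zero q h0 _ (by omega)
  have hp2 : (1:ℝ) - q ^ (2*j+1+1) ≠ 0 := one_sub_pow_ne_zero q h0 _ (by omega)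
  have hf1 : qfact q j ≠ 0 := hfac j
  have hf2 : qfact q (2*j+1) ≠ 0 := hfac _
  rw [tY, tS, tA]
  rw [show (j+1) - 1 - j = 0 from by omega, show (j+1) + j = 2*j+1 from by omega,
      show (j+1) - (j+1) = 0 from by omega, show (j+1) + (j+1) = 2*j+1+1 from by omega,
      show 2 * (j+1) = 2*j+1+1 from by omega]
  rw [qfact_succ q (2*j+1), qfact_succ q j, qfact_zero]
  have hEy : q ^ ((((j+1) * j + (j+1) : ℕ) : ℤ) - (Nat.choose j 2 : ℤ) - (j : ℤ))
      = q ^ ((Nat.choose (j+1+1) 2 : ℕ) : ℤ) := by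
    congr 1
    have h1 := choose2 j
    have h2 := choose2 (j+1+1)
    push_cast at h1 h2 ⊢
    nlinarith [h1, h2]
  have hEa : q ^ ((((j+1) * (j+1) + (j+1) : ℕ) : ℤ) - (Nat.choose (j+1) 2 : ℤ))
      = q ^ ((Nat.choose (j+1+1) 2 : ℕ) : ℤ) * q ^ (j+1) := by
    rw [← zpow_natCast q (j+1), ← zpow_add₀ hq0]
    congr 1
    have h1 := choose2 (j+1)
    have h2 := choose2 (j+1+1)
    push_cast at h1 h2 ⊢
    nlinarith [h1, h2]
  rw [hEy, hEa]
  have hP : q ^ ((Nat.choose (j+1+1) 2 : ℕ) : ℤ) ≠ 0 := zpow_ne_zero _ hq0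
  simp only [qint] at *
  field_simp
  ring

lemma base1 (q : ℝ) (hq0 : q ≠ 0) (hq1 : (1 : ℝ) - q ≠ 0)
    (h0 : ∀ j : ℕ, 1 ≤ j → qint q j ≠ 0) :
    tL q 1 + tA q 1 1 = tS q 1 := by
  have hp1 : (1:ℝ) - q ^ 1 ≠ 0 := by simpa using hq1
  have hp2 : (1:ℝ) - q ^ 2 ≠ 0 := by
    intro h; exact h0 2 (by omega) (by simp [qint, h])
  have f1 : qfact q 1 = qint q 1 := qfact_one q
  have f2 : qfact q 2 = qint q 1 * qint q 2 := by
    rw [show (2:ℕ) = 1 + 1 from rfl, qfact_succ q 1, f1]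
  have e1 : q ^ (((1 * 1 + 1 : ℕ) : ℤ) - (Nat.choose 1 2 : ℤ)) = q ^ (2:ℕ) := by
    rw [show ((1*1+1 : ℕ) : ℤ) - (Nat.choose 1 2 : ℤ) = ((2:ℕ) : ℤ) by norm_num [Nat.choose],
      zpow_natCast]
  have e2 : q ^ ((Nat.choose (1 + 1) 2 : ℕ) : ℤ) = q ^ (1:ℕ) := by
    rw [show ((Nat.choose (1+1) 2 : ℕ) : ℤ) = ((1:ℕ) : ℤ) by norm_num [Nat.choose],
      zpow_natCast]
  rw [tL, tA, tS, e1, e2]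
  rw [show (1:ℕ) - 1 = 0 from rfl, show (1:ℕ) + 1 = 2 from rfl, show 2 * 1 = 2 from rfl]
  rw [qfact_zero, f1, f2]
  simp only [qint]
  field_simp
  ring

lemma core (q : ℝ) (hq0 : q ≠ 0) (hq1 : (1 : ℝ) - q ≠ 0)
    (h0 : ∀ j : ℕ, 1 ≤ j → qint q j ≠ 0) (N : ℕ) (hN : 1 ≤ N) :
    (∑ k ∈ Finset.Icc 1 N, tL q k) + ∑ k ∈ Finset.Icc 1 N, tA q N k
      = ∑ k ∈ Finset.Icc 1 N, tS q k := by
  induction N, hN using Nat.le_induction with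
  | base =>
    simp only [Finset.Icc_self, Finset.sum_singleton]
    exact base1 q hq0 hq1 h0
  | succ N hN ih =>
    have key : ∑ k ∈ Finset.Icc 1 N, (tA q (N+1) k - tA q N k)
        = tY q (N+1) N - tY q (N+1) 0 := by
      rw [← Finset.Ico_add_one_right_eq_Icc, Finset.sum_Ico_eq_sum_range]
      rw [show N + 1 - 1 = N from rfl]
      rw [← Finset.sum_range_sub (f := fun m => tY q (N+1) m)]
      apply Finset.sum_congr rfl
      intro i hi
      have hiN : i < N := Finset.mem_range.mp hi
      have h := step1 q hq0 hq1 h0 i (N-1-i)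
      rw [show i+(N-1-i)+2 = N+1 from by omega, show i+(N-1-i)+1 = N from by omega] at h
      rw [show 1+i = i+1 from by omega]
      linarith [h]
    rw [Finset.sum_sub_distrib] at key
    rw [Finset.sum_Icc_succ_top (show 1 ≤ N+1 by omega),
        Finset.sum_Icc_succ_top (show 1 ≤ N+1 by omega),
        Finset.sum_Icc_succ_top (show 1 ≤ N+1 by omega)]
    have h2a := step2a q hq0 hq1 h0 N
    have h2b := step2b q hq0 hq1 h0 N
    linarith [ih, key, h2a, h2b]

lemma convA (q : ℝ) (hq0 : q ≠ 0) (hq1 : (1 : ℝ) - q ≠ 0)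
    (h0 : ∀ j : ℕ, 1 ≤ j → qint q j ≠ 0) (N k : ℕ) (hk : 1 ≤ k) (hkN : k ≤ N) :
    (-1 : ℝ) ^ (k - 1) * q ^ (((N * k + k : ℕ) : ℤ) - (Nat.choose k 2 : ℤ)) /
        ((qint q k) ^ 3 * qbinom q N k * qbinom q (N + k) k) = tA q N k := by
  obtain ⟨j, rfl⟩ : ∃ j, k = j + 1 := ⟨k - 1, by omega⟩
  have hfac := qfact_ne_zero q h0
  have hint : qint q (j+1) ≠ 0 := h0 _ (by omega)
  have hfN : qfact q N ≠ 0 := hfac N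
  have hfk : qfact q (j+1) ≠ 0 := hfac _
  have hf1 : qfact q (N - (j+1)) ≠ 0 := hfac _
  have hf2 : qfact q (N + (j+1)) ≠ 0 := hfac _
  rw [tA, qbinom, qbinom, show N + (j+1) - (j+1) = N from by omega,
    show (j+1) - 1 = j from by omega]
  field_simp
  ring

lemma convS (q : ℝ) (hq0 : q ≠ 0) (hq1 : (1 : ℝ) - q ≠ 0)
    (h0 : ∀ j : ℕ, 1 ≤ j → qint q j ≠ 0) (k : ℕ) (hk : 1 ≤ k) :
    (-1 : ℝ) ^ (k - 1) * q ^ Nat.choose (k + 1) 2 * (1 + 3 * q ^ k + q ^ (2 * k)) /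
        ((qint q k) ^ 3 * qbinom q (2 * k) k) = tS q k := by
  obtain ⟨j, rfl⟩ : ∃ j, k = j + 1 := ⟨k - 1, by omega⟩
  have hfac := qfact_ne_zero q h0
  have hint : qint q (j+1) ≠ 0 := h0 _ (by omega)
  have hfk : qfact q (j+1) ≠ 0 := hfac _
  have hf2 : qfact q (2 * (j+1)) ≠ 0 := hfac _
  rw [tS, qbinom, show 2 * (j+1) - (j+1) = j+1 from by omega,
    show (j+1) - 1 = j from by omega, zpow_natCast]
  field_simp
  ring

theorem stmt_5 (q : ℝ) (hq : q ≠ 1) (h0 : ∀ j : ℕ, 1 ≤ j → qint q j ≠ 0)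
    (N : ℕ) (hN : 1 ≤ N) :
    ∑ k ∈ Finset.Icc 1 N, (q ^ k + q ^ (2 * k)) / (qint q k) ^ 3 =
      ∑ k ∈ Finset.Icc 1 N,
          (-1 : ℝ) ^ (k - 1) * q ^ Nat.choose (k + 1) 2 * (1 + 3 * q ^ k + q ^ (2 * k)) /
            ((qint q k) ^ 3 * qbinom q (2 * k) k) -
        ∑ k ∈ Finset.Icc 1 N,
          (-1 : ℝ) ^ (k - 1) * q ^ (((N * k + k : ℕ) : ℤ) - (Nat.choose k 2 : ℤ)) /
            ((qint q k) ^ 3 * qbinom q N k * qbinom q (N + k) k) := by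
  rcases eq_or_ne q 0 with rfl | hq0
  · have hL : ∀ k ∈ Finset.Icc 1 N, ((0:ℝ) ^ k + 0 ^ (2 * k)) / (qint 0 k) ^ 3 = 0 := by
      intro k hk
      have h1 : 1 ≤ k := (Finset.mem_Icc.mp hk).1
      rw [zero_pow (by omega), zero_pow (by omega)]
      simp
    have hS : ∀ k ∈ Finset.Icc 1 N,
        (-1 : ℝ) ^ (k - 1) * (0:ℝ) ^ Nat.choose (k + 1) 2 * (1 + 3 * (0:ℝ) ^ k + (0:ℝ) ^ (2 * k)) /
          ((qint 0 k) ^ 3 * qbinom 0 (2 * k) k) = 0 := by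
      intro k hk
      have h1 : 1 ≤ k := (Finset.mem_Icc.mp hk).1
      have hc : Nat.choose (k+1) 2 ≠ 0 := Nat.ne_of_gt (Nat.choose_pos (by omega))
      rw [zero_pow hc]
      simp
    have hT : ∀ k ∈ Finset.Icc 1 N,
        (-1 : ℝ) ^ (k - 1) * (0:ℝ) ^ (((N * k + k : ℕ) : ℤ) - (Nat.choose k 2 : ℤ)) /
          ((qint 0 k) ^ 3 * qbinom 0 N k * qbinom 0 (N + k) k) = 0 := by
      intro k hk
      have h1 : 1 ≤ k := (Finset.mem_Icc.mp hk).1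
      have h2 : k ≤ N := (Finset.mem_Icc.mp hk).2
      have h3 : Nat.choose k 2 < N * k + k := by
        calc Nat.choose k 2 ≤ k * (k - 1) := by
              rw [Nat.choose_two_right]; exact Nat.div_le_self _ _
          _ ≤ k * N := Nat.mul_le_mul_left k (by omega)
          _ = N * k := Nat.mul_comm k N
          _ < N * k + k := by omega
      have h4 : ((N * k + k : ℕ) : ℤ) - (Nat.choose k 2 : ℤ) ≠ 0 := by
        have : (Nat.choose k 2 : ℤ) < ((N * k + k : ℕ) : ℤ) := by exact_mod_cast h3
        omega
      rw [zero_zpow _ h4]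
      simp
    rw [Finset.sum_congr rfl hL, Finset.sum_congr rfl hS, Finset.sum_congr rfl hT]
    simp
  · have hq1 : (1 : ℝ) - q ≠ 0 := sub_ne_zero.mpr (Ne.symm hq)
    have hS : ∑ k ∈ Finset.Icc 1 N,
        (-1 : ℝ) ^ (k - 1) * q ^ Nat.choose (k + 1) 2 * (1 + 3 * q ^ k + q ^ (2 * k)) /
          ((qint q k) ^ 3 * qbinom q (2 * k) k) = ∑ k ∈ Finset.Icc 1 N, tS q k :=
      Finset.sum_congr rfl fun k hk => convS q hq0 hq1 h0 k (Finset.mem_Icc.mp hk).1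
    have hT : ∑ k ∈ Finset.Icc 1 N,
        (-1 : ℝ) ^ (k - 1) * q ^ (((N * k + k : ℕ) : ℤ) - (Nat.choose k 2 : ℤ)) /
          ((qint q k) ^ 3 * qbinom q N k * qbinom q (N + k) k)
        = ∑ k ∈ Finset.Icc 1 N, tA q N k :=
      Finset.sum_congr rfl fun k hk =>
        convA q hq0 hq1 h0 N k (Finset.mem_Icc.mp hk).1 (Finset.mem_Icc.mp hk).2
    have hL : ∑ k ∈ Finset.Icc 1 N, (q ^ k + q ^ (2 * k)) / (qint q k) ^ 3
        = ∑ k ∈ Finset.Icc 1 N, tL q k := rfl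
    rw [hS, hT, hL]
    linarith [core q hq0 hq1 h0 N hN]
end

section
/- For 0 < q < 1, the boundary term tends to zero: for each fixed r ≥ 0, lim_{N→∞} ∑_{k=1}^{N} (-1)^{k-1+r} q^{-k(k-1)/2 + Nk + k} H_{q,k-1}({2}^r) / ([k]_q^3 qbinom(N,k) qbinom(N+k,k)) = 0. -/
open Finset

section aux

variable {q : ℝ} (hq0 : 0 < q) (hq1 : q < 1)

lemma one_le_qint (hq0 : 0 < q) (hq1 : q < 1) {j : ℕ} (hj : 1 ≤ j) : 1 ≤ qint q j := by
  rw [qint, le_div_iff₀ (by linarith)]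
  have h : q ^ j ≤ q ^ 1 := pow_le_pow_of_le_one hq0.le hq1.le hj
  simp only [pow_one] at h
  linarith

lemma qint_pos (hq0 : 0 < q) (hq1 : q < 1) {j : ℕ} (hj : 1 ≤ j) : 0 < qint q j :=
  lt_of_lt_of_le one_pos (one_le_qint hq0 hq1 hj)

lemma qint_mono (hq0 : 0 < q) (hq1 : q < 1) {a b : ℕ} (hab : a ≤ b) :
    qint q a ≤ qint q b := by
  rw [qint, qint]
  apply div_le_div_of_nonneg_right _ (by linarith)
  have : q ^ b ≤ q ^ a := pow_le_pow_of_le_one hq0.le hq1.le hab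
  linarith

lemma one_le_qfact (hq0 : 0 < q) (hq1 : q < 1) (n : ℕ) : 1 ≤ qfact q n := by
  rw [qfact]
  calc (1 : ℝ) = ∏ _j ∈ Finset.Icc 1 n, (1 : ℝ) := by simp
    _ ≤ ∏ j ∈ Finset.Icc 1 n, qint q j :=
        Finset.prod_le_prod (by simp) fun j hj => one_le_qint hq0 hq1 (Finset.mem_Icc.mp hj).1

lemma qfact_pos (hq0 : 0 < q) (hq1 : q < 1) (n : ℕ) : 0 < qfact q n :=
  lt_of_lt_of_le one_pos (one_le_qfact hq0 hq1 n)

lemma one_le_qbinom (hq0 : 0 < q) (hq1 : q < 1) {N k : ℕ} (hk : k ≤ N) :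
    1 ≤ qbinom q N k := by
  have hIoc : ∀ n : ℕ, qfact q n = ∏ j ∈ Finset.Ioc 0 n, qint q j := by
    intro n; rw [qfact, ← Finset.Icc_add_one_left_eq_Ioc]; rfl
  have hsplit : qfact q N = qfact q (N - k) * ∏ j ∈ Finset.Ioc (N - k) N, qint q j := by
    rw [hIoc, hIoc]
    exact (Finset.prod_Ioc_consecutive _ (Nat.zero_le _) (Nat.sub_le N k)).symm
  have hmap : ∏ j ∈ Finset.Ioc (N - k) N, qint q j
      = ∏ j ∈ Finset.Ioc 0 k, qint q (j + (N - k)) := by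
    have hI : Finset.Ioc (N - k) N = (Finset.Ioc 0 k).map (addRightEmbedding (N - k)) := by
      rw [Finset.map_add_right_Ioc]
      congr 1 <;> omega
    rw [hI, Finset.prod_map]
    rfl
  have hge : qfact q k ≤ ∏ j ∈ Finset.Ioc (N - k) N, qint q j := by
    rw [hmap, hIoc]
    exact Finset.prod_le_prod (fun j hj => (qint_pos hq0 hq1 (Finset.mem_Ioc.mp hj).1).le)
      (fun j hj => qint_mono hq0 hq1 (Nat.le_add_right _ _))
  have hpos : 0 < qfact q k * qfact q (N - k) :=
    mul_pos (qfact_pos hq0 hq1 k) (qfact_pos hq0 hq1 (N - k))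
  rw [qbinom, hsplit, le_div_iff₀ hpos, one_mul]
  calc qfact q k * qfact q (N - k) ≤ (∏ j ∈ Finset.Ioc (N - k) N, qint q j) * qfact q (N - k) :=
        mul_le_mul_of_nonneg_right hge (qfact_pos hq0 hq1 _).le
    _ = qfact q (N - k) * ∏ j ∈ Finset.Ioc (N - k) N, qint q j := mul_comm _ _

lemma qH_nonneg (hq0 : 0 < q) (hq1 : q < 1) (k s : ℕ) : 0 ≤ qH q k s := by
  apply Finset.sum_nonneg
  intro A hA
  apply Finset.prod_nonneg
  intro j hj
  have hj1 : 1 ≤ j := (Finset.mem_Icc.mp ((Finset.mem_powersetCard.mp hA).1 hj)).1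
  positivity

lemma qH_le (hq0 : 0 < q) (hq1 : q < 1) (k s : ℕ) : qH q k s ≤ 2 ^ k := by
  calc qH q k s ≤ ∑ A ∈ (Finset.Icc 1 k).powersetCard s, (1 : ℝ) := by
        apply Finset.sum_le_sum
        intro A hA
        apply Finset.prod_le_one
        · intro j hj
          have hj1 : 1 ≤ j := (Finset.mem_Icc.mp ((Finset.mem_powersetCard.mp hA).1 hj)).1
          positivity
        · intro j hj
          have hj1 : 1 ≤ j := (Finset.mem_Icc.mp ((Finset.mem_powersetCard.mp hA).1 hj)).1
          have h1 : 1 ≤ qint q j := one_le_qint hq0 hq1 hj1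
          rw [div_le_one (by positivity)]
          calc q ^ j ≤ 1 := pow_le_one₀ hq0.le hq1.le
            _ ≤ (qint q j) ^ 2 := one_le_pow₀ h1
    _ = (((Finset.Icc 1 k).powersetCard s).card : ℝ) := by rw [Finset.sum_const]; simp
    _ ≤ ((2 : ℕ) ^ k : ℝ) := by
        have hsub : (Finset.Icc 1 k).powersetCard s ⊆ (Finset.Icc 1 k).powerset := by
          intro A hA
          exact Finset.mem_powerset.mpr (Finset.mem_powersetCard.mp hA).1
        have := Finset.card_le_card hsub
        rw [Finset.card_powerset, Nat.card_Icc] at this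
        exact_mod_cast this.trans (le_of_eq (by norm_num))
    _ = 2 ^ k := by norm_num

end aux

theorem stmt_9 (q : ℝ) (hq0 : 0 < q) (hq1 : q < 1) (r : ℕ) :
    Filter.Tendsto
      (fun N : ℕ =>
        ∑ k ∈ Finset.Icc 1 N,
          (-1 : ℝ) ^ (k - 1 + r) * q ^ (((N * k + k : ℕ) : ℤ) - (Nat.choose k 2 : ℤ)) *
              qH q (k - 1) r /
            ((qint q k) ^ 3 * qbinom q N k * qbinom q (N + k) k))
      Filter.atTop (nhds 0) := by
  set s : ℝ := Real.sqrt q with hs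
  have hs0 : 0 < s := Real.sqrt_pos.mpr hq0
  have hsq : s ^ 2 = q := Real.sq_sqrt hq0.le
  have hs1 : s < 1 := by
    nlinarith [hs0, hsq]
  -- the squeeze function
  have hg : Filter.Tendsto (fun N : ℕ => (N : ℝ) * s ^ (N + 1)) Filter.atTop (nhds 0) := by
    have h := (tendsto_self_mul_const_pow_of_lt_one hs0.le hs1).mul_const s
    rw [zero_mul] at h
    refine h.congr fun N => ?_
    rw [pow_succ]; ring
  apply squeeze_zero_norm' _ hg
  -- eventually s^(N+1) ≤ 1/2
  have hev : ∀ᶠ N : ℕ in Filter.atTop, s ^ (N + 1) ≤ 1 / 2 := by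
    have hp : Filter.Tendsto (fun N : ℕ => s ^ (N + 1)) Filter.atTop (nhds 0) := by
      have := tendsto_pow_atTop_nhds_zero_of_lt_one hs0.le hs1
      exact (this.comp (Filter.tendsto_add_atTop_nat 1))
    exact hp.eventually (eventually_le_nhds (by norm_num))
  filter_upwards [hev] with N hhalf
  -- bound each term
  have hterm : ∀ k ∈ Finset.Icc 1 N,
      ‖(-1 : ℝ) ^ (k - 1 + r) * q ^ (((N * k + k : ℕ) : ℤ) - (Nat.choose k 2 : ℤ)) *
          qH q (k - 1) r /
        ((qint q k) ^ 3 * qbinom q N k * qbinom q (N + k) k)‖ ≤ s ^ (N + 1) := by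
    intro k hk
    obtain ⟨hk1, hkN⟩ := Finset.mem_Icc.mp hk
    -- rewrite the zpow as a pow
    have hc2 : Nat.choose k 2 ≤ N * k + k := by
      have h1 : Nat.choose k 2 = k * (k - 1) / 2 := Nat.choose_two_right k
      have h2 : k * (k - 1) ≤ k * N := Nat.mul_le_mul_left k (by omega)
      have h3 : k * N = N * k := Nat.mul_comm k N
      omega
    set e : ℕ := N * k + k - Nat.choose k 2 with he
    have hz : q ^ (((N * k + k : ℕ) : ℤ) - (Nat.choose k 2 : ℤ)) = q ^ e := by
      have hcast : ((N * k + k : ℕ) : ℤ) - ((Nat.choose k 2 : ℕ) : ℤ) = ((e : ℕ) : ℤ) := by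
        rw [he, Nat.cast_sub hc2]
      rw [hcast, zpow_natCast]
    -- key exponent inequality
    have hkey : k * (N + 1) ≤ 2 * e := by
      have h2c : 2 * Nat.choose k 2 = k * (k - 1) := by
        rw [Nat.choose_two_right]
        have hdvd : 2 ∣ k * (k - 1) := by
          rcases Nat.even_or_odd k with h | h
          · exact Dvd.dvd.mul_right h.two_dvd _
          · have : Even (k - 1) := Nat.Odd.sub_odd h odd_one
            exact Dvd.dvd.mul_left this.two_dvd _
        omega
      have hle2 : k * (k - 1) ≤ N * k := by
        calc k * (k - 1) ≤ k * N := Nat.mul_le_mul_left k (by omega)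
          _ = N * k := Nat.mul_comm k N
      have hkn : k * (N + 1) = N * k + k := by ring
      omega
    -- q ^ e ≤ (s ^ (N+1)) ^ k
    have hqe : q ^ e ≤ (s ^ (N + 1)) ^ k := by
      calc q ^ e = (s ^ 2) ^ e := by rw [hsq]
        _ = s ^ (2 * e) := by rw [← pow_mul]
        _ ≤ s ^ (k * (N + 1)) := pow_le_pow_of_le_one hs0.le hs1.le hkey
        _ = (s ^ (N + 1)) ^ k := by rw [← pow_mul, Nat.mul_comm]
    -- denominator ≥ 1
    have hD : 1 ≤ (qint q k) ^ 3 * qbinom q N k * qbinom q (N + k) k := by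
      have h1 : 1 ≤ (qint q k) ^ 3 := one_le_pow₀ (one_le_qint hq0 hq1 hk1)
      have h2 : 1 ≤ qbinom q N k := one_le_qbinom hq0 hq1 hkN
      have h3 : 1 ≤ qbinom q (N + k) k := one_le_qbinom hq0 hq1 (Nat.le_add_left k N)
      have h12 : (1 : ℝ) ≤ (qint q k) ^ 3 * qbinom q N k := by nlinarith
      nlinarith
    have hD0 : 0 < (qint q k) ^ 3 * qbinom q N k * qbinom q (N + k) k := by linarith
    -- numerator bound
    have hH0 : 0 ≤ qH q (k - 1) r := qH_nonneg hq0 hq1 _ _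
    have hHle : qH q (k - 1) r ≤ 2 ^ (k - 1) := qH_le hq0 hq1 _ _
    rw [hz]
    rw [norm_div, norm_mul, norm_mul]
    have habs1 : ‖(-1 : ℝ) ^ (k - 1 + r)‖ = 1 := by
      rw [norm_pow, norm_neg, norm_one, one_pow]
    rw [habs1, one_mul, Real.norm_of_nonneg (pow_nonneg hq0.le e),
      Real.norm_of_nonneg hH0, Real.norm_of_nonneg hD0.le]
    calc q ^ e * qH q (k - 1) r / ((qint q k) ^ 3 * qbinom q N k * qbinom q (N + k) k)
        ≤ q ^ e * qH q (k - 1) r := by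
          apply div_le_self (by positivity) hD
      _ ≤ (s ^ (N + 1)) ^ k * 2 ^ (k - 1) := by
          apply mul_le_mul hqe hHle hH0 (by positivity)
      _ ≤ s ^ (N + 1) := by
          have hx0 : 0 ≤ 2 * s ^ (N + 1) := by positivity
          have hx1 : 2 * s ^ (N + 1) ≤ 1 := by linarith
          have hpk : (2 * s ^ (N + 1)) ^ k ≤ 2 * s ^ (N + 1) :=
            pow_le_of_le_one hx0 hx1 (by omega)
          have hexp : (s ^ (N + 1)) ^ k * 2 ^ (k - 1) * 2 = (2 * s ^ (N + 1)) ^ k := by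
            obtain ⟨m, hm⟩ : ∃ m, k = m + 1 := ⟨k - 1, by omega⟩
            subst hm
            simp only [Nat.add_sub_cancel, mul_pow]
            ring
          linarith [hexp, hpk]
    -- done with term bound
  calc ‖∑ k ∈ Finset.Icc 1 N,
      (-1 : ℝ) ^ (k - 1 + r) * q ^ (((N * k + k : ℕ) : ℤ) - (Nat.choose k 2 : ℤ)) *
          qH q (k - 1) r /
        ((qint q k) ^ 3 * qbinom q N k * qbinom q (N + k) k)‖
      ≤ ∑ k ∈ Finset.Icc 1 N, s ^ (N + 1) := by
        refine (norm_sum_le _ _).trans (Finset.sum_le_sum hterm)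
    _ = (N : ℝ) * s ^ (N + 1) := by
        rw [Finset.sum_const, Nat.card_Icc]
        simp [nsmul_eq_mul]
end

section
/- (Markov–Apéry series) ζ(3) = (5/2) ∑_{k=1}^{∞} (-1)^{k-1} / (k^3 · binom(2k,k)). -/
open Finset

noncomputable def fa (n : ℕ) : ℝ := (Nat.factorial n : ℝ)

lemma fa_pos (n : ℕ) : 0 < fa n := by
  unfold fa; exact_mod_cast Nat.factorial_pos n

lemma fa_ne (n : ℕ) : fa n ≠ 0 := (fa_pos n).ne'

lemma fa_succ (n : ℕ) : fa (n + 1) = ((n : ℝ) + 1) * fa n := by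
  unfold fa; rw [Nat.factorial_succ]; push_cast; ring

lemma fa_zero : fa 0 = 1 := by unfold fa; norm_num

noncomputable def Eps (k j : ℕ) : ℝ := fa k ^ 2 * fa j / (2 * (k : ℝ) ^ 3 * fa (2 * k + j))

noncomputable def T (k j : ℕ) : ℝ := fa k ^ 2 * fa j / ((k : ℝ) ^ 2 * fa (2 * k + j + 1))

noncomputable def U (k j : ℕ) : ℝ :=
  (-1) ^ k * (fa k ^ 2 * fa j * (2 * (k : ℝ) + 1) / ((k : ℝ) ^ 2 * fa (2 * k + j + 2)))

noncomputable def mm (k j : ℕ) : ℝ := ((k : ℝ) + j + 1) * ((k : ℝ) + j + 2)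

lemma mm_pos (k j : ℕ) : 0 < mm k j := by unfold mm; positivity

noncomputable def G (k j : ℕ) : ℝ :=
  (-1) ^ k * (((2 * mm k j + 1) * k + 3 * mm k j + 1) * fa k ^ 2 * fa j) /
    (mm k j ^ 2 * fa (2 * k + j + 2))

lemma eps_diff (k j : ℕ) (hk : k ≠ 0) : Eps k (j + 1) - Eps k j = -T k j := by
  have hk' : (k : ℝ) ≠ 0 := Nat.cast_ne_zero.mpr hk
  unfold Eps T
  have h1 : 2 * k + (j + 1) = (2 * k + j) + 1 := by omega
  rw [h1, fa_succ, fa_succ]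
  have h2 : fa (2 * k + j) ≠ 0 := fa_ne _
  field_simp
  push_cast
  ring

lemma t_diff (k j : ℕ) (hk : k ≠ 0) :
    U k j = (-1 : ℝ) ^ (k + 1) * (T k (j + 1) - T k j) := by
  have hk' : (k : ℝ) ≠ 0 := Nat.cast_ne_zero.mpr hk
  unfold U T
  have h1 : 2 * k + (j + 1) + 1 = (2 * k + j + 1) + 1 := by omega
  have h2 : 2 * k + j + 2 = (2 * k + j + 1) + 1 := by omega
  rw [h1, h2, fa_succ (2 * k + j + 1), fa_succ j, pow_succ]
  have h3 : fa (2 * k + j + 1) ≠ 0 := fa_ne _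
  field_simp
  push_cast
  ring

lemma cert_step (k j : ℕ) : U (k + 1) j = G (k + 1) j - G k (j + 1) := by
  have hm : mm (k + 1) j = mm k (j + 1) := by unfold mm; push_cast; ring
  have hmp : mm (k + 1) j ≠ 0 := (mm_pos _ _).ne'
  unfold U G
  rw [← hm]
  have h1 : 2 * (k + 1) + j + 2 = (2 * k + (j + 1) + 2) + 1 := by omega
  rw [h1, fa_succ (2 * k + (j + 1) + 2), fa_succ j, fa_succ k, pow_succ]
  have h3 : fa (2 * k + (j + 1) + 2) ≠ 0 := fa_ne _
  have hk1 : ((k : ℝ) + 1) ≠ 0 := by positivity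
  unfold mm
  field_simp
  push_cast
  ring

noncomputable def rr (n : ℕ) : ℝ :=
  1 / (n : ℝ) ^ 3 + 2 * (-1) ^ n * fa n ^ 2 / ((n : ℝ) ^ 3 * fa (2 * n))

lemma rstep (M : ℕ) :
    rr (M + 2) = rr (M + 1) + G M 0 - G 0 M + (-1) ^ M * T (M + 1) 0 := by
  unfold rr G T mm
  have e1 : 2 * (M + 2) = (((2 * M) + 1) + 1) + 1 + 1 := by omega
  have e2 : 2 * (M + 1) = ((2 * M) + 1) + 1 := by omega
  have e3 : 2 * M + 0 + 2 = ((2 * M) + 1) + 1 := by omega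
  have e4 : 2 * 0 + M + 2 = (M + 1) + 1 := by omega
  have e5 : M + 2 = (M + 1) + 1 := by omega
  rw [e1, e2, e3, e4, e5]
  rw [fa_succ (2*M+1+1+1), fa_succ (2*M+1+1), fa_succ (2*M+1), fa_succ (2*M),
    fa_succ (M+1), fa_succ M, fa_zero]
  have hM : fa M ≠ 0 := fa_ne M
  have h2M : fa (2*M) ≠ 0 := fa_ne (2*M)
  have hs1 : ((-1:ℝ)) ^ (M+1) = -(-1) ^ M := by rw [pow_succ]; ring
  have hs2 : ((-1:ℝ)) ^ (M+1+1) = (-1) ^ M := by rw [pow_succ, pow_succ]; ring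
  rw [hs2, hs1]
  rcases Nat.even_or_odd M with hE | hO
  · rw [hE.neg_one_pow]
    push_cast
    field_simp
    ring
  · rw [hO.neg_one_pow]
    push_cast
    field_simp
    ring

lemma t_step (i j : ℕ) :
    (-1:ℝ) ^ i * T (i+1) (j+1) = (-1:ℝ) ^ i * T (i+1) j + U (i+1) j := by
  rw [t_diff (i+1) j (by omega)]
  have : ((-1:ℝ)) ^ (i+1+1) = (-1) ^ i := by rw [pow_succ, pow_succ]; ring
  rw [this]; ring

noncomputable def LL (N : ℕ) : ℝ := ∑ i ∈ Finset.range (N - 1), (-1:ℝ) ^ i * T (i+1) (N-2-i)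

lemma LL_succ (M : ℕ) :
    LL (M + 2) = LL (M + 1) + (G M 0 - G 0 M) + (-1) ^ M * T (M + 1) 0 := by
  have h1 : LL (M+2) = ∑ i ∈ Finset.range (M+1), (-1:ℝ)^i * T (i+1) (M-i) := by
    unfold LL
    rw [show M + 2 - 1 = M + 1 from by omega]
    refine Finset.sum_congr rfl fun i hi => ?_
    rw [show M + 2 - 2 - i = M - i from by omega]
  have h2 : LL (M+1) = ∑ i ∈ Finset.range M, (-1:ℝ)^i * T (i+1) (M-1-i) := by
    unfold LL
    rw [show M + 1 - 1 = M from by omega]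
    refine Finset.sum_congr rfl fun i hi => ?_
    rw [show M + 1 - 2 - i = M - 1 - i from by omega]
  rw [h1, Finset.sum_range_succ, Nat.sub_self]
  have h3 : ∑ i ∈ Finset.range M, (-1:ℝ)^i * T (i+1) (M-i)
      = ∑ i ∈ Finset.range M, ((-1:ℝ)^i * T (i+1) (M-1-i) + U (i+1) (M-1-i)) := by
    refine Finset.sum_congr rfl fun i hi => ?_
    have hi' : i < M := Finset.mem_range.mp hi
    rw [show M - i = (M-1-i)+1 from by omega, t_step]
  rw [h3, Finset.sum_add_distrib, ← h2]
  have h4 : ∑ i ∈ Finset.range M, U (i+1) (M-1-i) = G M 0 - G 0 M := by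
    have ht := Finset.sum_range_sub (f := fun i => G i (M - i)) M
    simp only [Nat.sub_self, Nat.sub_zero] at ht
    rw [← ht]
    refine Finset.sum_congr rfl fun i hi => ?_
    have hi' : i < M := Finset.mem_range.mp hi
    rw [cert_step]
    rw [show M - (i+1) = M-1-i from by omega, show M - i = (M-1-i)+1 from by omega]
  rw [h4]

lemma LL_eq (N : ℕ) (h : 1 ≤ N) : LL N = rr N := by
  induction N, h using Nat.le_induction with
  | base =>
    unfold LL rr
    norm_num [fa, Nat.factorial]
  | succ N hN ih =>
    obtain ⟨M, rfl⟩ : ∃ M, N = M + 1 := ⟨N - 1, by omega⟩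
    rw [show M + 1 + 1 = M + 2 from rfl, LL_succ, ih, rstep]
    ring

noncomputable def ff (n : ℕ) : ℝ := 1 / ((n:ℝ) + 1) ^ 3

noncomputable def gg (k : ℕ) : ℝ :=
  (-1:ℝ) ^ k / (((k:ℝ) + 1) ^ 3 * (Nat.choose (2 * (k + 1)) (k + 1) : ℝ))

noncomputable def RS (N : ℕ) : ℝ := ∑ i ∈ Finset.range N, (-1:ℝ) ^ (i+1) * Eps (i+1) (N-1-i)

lemma choose_cast (n : ℕ) :
    ((Nat.choose (2 * (n+1)) (n+1) : ℕ) : ℝ) = fa (2*n+2) / fa (n+1) ^ 2 := by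
  have h := Nat.choose_mul_factorial_mul_factorial (show n+1 ≤ 2*(n+1) by omega)
  have h2 : 2*(n+1) - (n+1) = n+1 := by omega
  rw [h2] at h
  have hc : ((Nat.choose (2*(n+1)) (n+1) * (n+1).factorial * (n+1).factorial : ℕ) : ℝ)
      = ((2*(n+1)).factorial : ℝ) := by exact_mod_cast congrArg (Nat.cast (R := ℝ)) h
  push_cast at hc
  have hfa : fa (n+1) ≠ 0 := fa_ne _
  unfold fa
  rw [show 2*n+2 = 2*(n+1) from by omega]
  field_simp
  nlinarith [hc]

lemma eps_step_alg (N : ℕ) :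
    ff N = 5/2 * gg N + rr (N+1) + (-1:ℝ)^(N+1) * Eps (N+1) 0 := by
  unfold ff gg rr Eps
  rw [choose_cast]
  rw [show 2*(N+1)+0 = 2*N+2 from by omega, show 2*(N+1) = 2*N+2 from by omega]
  have hfa : fa (N+1) ≠ 0 := fa_ne _
  have hfb : fa (2*N+2) ≠ 0 := fa_ne _
  have hN : ((N:ℝ)+1) ≠ 0 := by positivity
  have hs1 : ((-1:ℝ)) ^ (N+1) = -(-1) ^ N := by rw [pow_succ]; ring
  rw [hs1, fa_zero]
  push_cast
  field_simp
  ring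

lemma eps_step2 (i j : ℕ) :
    (-1:ℝ)^(i+1) * Eps (i+1) (j+1) = (-1:ℝ)^(i+1) * Eps (i+1) j + (-1:ℝ)^i * T (i+1) j := by
  have h := eps_diff (i+1) j (by omega)
  have hs : ((-1:ℝ)) ^ (i+1) = -(-1) ^ i := by rw [pow_succ]; ring
  rw [hs]
  linear_combination (-(-1:ℝ)^i) * h

lemma RS_succ (N : ℕ) : RS (N+1) = RS N + LL (N+1) + (-1:ℝ)^(N+1) * Eps (N+1) 0 := by
  unfold RS
  rw [Finset.sum_range_succ, Nat.add_sub_cancel, Nat.sub_self]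
  have h1 : ∑ i ∈ Finset.range N, (-1:ℝ)^(i+1) * Eps (i+1) (N-i)
      = ∑ i ∈ Finset.range N, ((-1:ℝ)^(i+1) * Eps (i+1) (N-1-i) + (-1:ℝ)^i * T (i+1) (N-1-i)) := by
    refine Finset.sum_congr rfl fun i hi => ?_
    have hi' : i < N := Finset.mem_range.mp hi
    rw [show N-i = (N-1-i)+1 from by omega, eps_step2]
  rw [h1, Finset.sum_add_distrib]
  have h2 : LL (N+1) = ∑ i ∈ Finset.range N, (-1:ℝ)^i * T (i+1) (N-1-i) := by
    unfold LL
    rw [show N+1-1 = N from by omega]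
    refine Finset.sum_congr rfl fun i hi => ?_
    rw [show N+1-2-i = N-1-i from by omega]
  rw [h2]

lemma mainFin (N : ℕ) :
    ∑ i ∈ Finset.range N, ff i = 5/2 * ∑ i ∈ Finset.range N, gg i + RS N := by
  induction N with
  | zero => simp [RS]
  | succ N ih =>
    rw [Finset.sum_range_succ, Finset.sum_range_succ, RS_succ, LL_eq (N+1) (by omega), ih,
      eps_step_alg N]
    ring

lemma choose_ge (n i : ℕ) : n + 1 ≤ Nat.choose (n + i + 1) (i + 1) := by
  induction i with
  | zero => simp
  | succ i ih =>
    have h : Nat.choose (n+i+1+1) (i+1+1) = Nat.choose (n+i+1) (i+1) + Nat.choose (n+i+1) (i+1+1) :=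
      Nat.choose_succ_succ _ _
    have e : n + (i+1) + 1 = n+i+1+1 := by omega
    rw [e, h]
    omega

lemma fact_ineq (i j : ℕ) :
    (Nat.factorial (i+1))^2 * Nat.factorial j * (i+j+2) ≤ Nat.factorial (2*(i+1)+j) := by
  have h1 := Nat.choose_mul_factorial_mul_factorial (show i+1 ≤ i+1+j by omega)
  rw [show i+1+j - (i+1) = j from by omega] at h1
  have h2 := Nat.choose_mul_factorial_mul_factorial (show i+1 ≤ 2*(i+1)+j by omega)
  rw [show 2*(i+1)+j - (i+1) = i+1+j from by omega] at h2
  have hg : i+j+2 ≤ Nat.choose (2*(i+1)+j) (i+1) := by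
    have := choose_ge (i+j+1) i
    rw [show i+j+1+i+1 = 2*(i+1)+j from by omega] at this
    omega
  have hg2 : 1 ≤ Nat.choose (i+1+j) (i+1) := Nat.choose_pos (by omega)
  calc (Nat.factorial (i+1))^2 * Nat.factorial j * (i+j+2)
      ≤ (Nat.factorial (i+1))^2 * Nat.factorial j * (Nat.choose (2*(i+1)+j) (i+1) * Nat.choose (i+1+j) (i+1)) := by
        refine Nat.mul_le_mul_left _ ?_
        calc i+j+2 = (i+j+2) * 1 := by ring
        _ ≤ Nat.choose (2*(i+1)+j) (i+1) * Nat.choose (i+1+j) (i+1) := Nat.mul_le_mul hg hg2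
    _ = Nat.choose (2*(i+1)+j) (i+1) * Nat.factorial (i+1) * (Nat.choose (i+1+j) (i+1) * Nat.factorial (i+1) * Nat.factorial j) := by ring
    _ = Nat.choose (2*(i+1)+j) (i+1) * Nat.factorial (i+1) * Nat.factorial (i+1+j) := by rw [h1]
    _ = Nat.factorial (2*(i+1)+j) := h2

lemma eps_nonneg (k j : ℕ) : 0 ≤ Eps k j := by
  unfold Eps
  have := fa_pos k; have := fa_pos j; have := fa_pos (2*k+j)
  positivity

lemma eps_le (i N : ℕ) (h : i < N) :
    Eps (i+1) (N-1-i) ≤ 1/(2*((i:ℝ)+1)^3*((N:ℝ)+1)) := by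
  have key : fa (i+1)^2 * fa (N-1-i) * ((N:ℝ)+1) ≤ fa (2*(i+1)+(N-1-i)) := by
    have h0 := fact_ineq i (N-1-i)
    rw [show i+(N-1-i)+2 = N+1 from by omega] at h0
    have h1 := (Nat.cast_le (α := ℝ)).mpr h0
    push_cast at h1
    unfold fa
    exact_mod_cast h1
  unfold Eps
  rw [div_le_div_iff₀ (by have := fa_pos (2*(i+1)+(N-1-i)); positivity) (by positivity)]
  have hp : (0:ℝ) < 2*((i:ℝ)+1)^3 := by positivity
  have q1 := fa_pos (i+1); have q2 := fa_pos (N-1-i)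
  push_cast
  nlinarith [key, mul_le_mul_of_nonneg_left key (le_of_lt hp)]

lemma cube_sum (N : ℕ) : ∑ i ∈ Finset.range N, 1/(2*((i:ℝ)+1)^3) ≤ 1 - 1/((N:ℝ)+1) := by
  induction N with
  | zero => norm_num
  | succ N ih =>
    rw [Finset.sum_range_succ]
    have h : 1/(2*((N:ℝ)+1)^3) ≤ 1/((N:ℝ)+1) - 1/((N:ℝ)+2) := by
      rw [div_sub_div _ _ (by positivity) (by positivity), div_le_div_iff₀ (by positivity) (by positivity)]
      nlinarith [sq_nonneg ((N:ℝ)+1)]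
    push_cast
    rw [show ((N:ℝ)+1+1) = (N:ℝ)+2 from by ring]
    linarith

lemma RS_bound (N : ℕ) : |RS N| ≤ 1/((N:ℝ)+1) := by
  have h1 : |RS N| ≤ ∑ i ∈ Finset.range N, Eps (i+1) (N-1-i) := by
    refine (Finset.abs_sum_le_sum_abs _ _).trans ?_
    refine Finset.sum_le_sum fun i hi => ?_
    rw [abs_mul, abs_pow, abs_neg, abs_one, one_pow, one_mul, abs_of_nonneg (eps_nonneg _ _)]
  have h2 : ∑ i ∈ Finset.range N, Eps (i+1) (N-1-i)
      ≤ ∑ i ∈ Finset.range N, 1/(2*((i:ℝ)+1)^3) * (1/((N:ℝ)+1)) := by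
    refine Finset.sum_le_sum fun i hi => ?_
    have := eps_le i N (Finset.mem_range.mp hi)
    calc Eps (i+1) (N-1-i) ≤ 1/(2*((i:ℝ)+1)^3*((N:ℝ)+1)) := this
    _ = 1/(2*((i:ℝ)+1)^3) * (1/((N:ℝ)+1)) := by rw [← one_div_mul_one_div]
  rw [← Finset.sum_mul] at h2
  have h3 : (∑ i ∈ Finset.range N, 1/(2*((i:ℝ)+1)^3)) * (1/((N:ℝ)+1)) ≤ 1 * (1/((N:ℝ)+1)) := by
    refine mul_le_mul_of_nonneg_right ?_ (by positivity)
    have := cube_sum N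
    have hp : 0 < 1/((N:ℝ)+1) := by positivity
    linarith
  rw [one_mul] at h3
  linarith

lemma ff_summable : Summable ff := by
  have h : Summable (fun n : ℕ => 1/((n:ℝ))^3) := Real.summable_one_div_nat_pow.mpr (by norm_num)
  have h2 := (summable_nat_add_iff 1).mpr h
  unfold ff
  refine h2.congr fun n => ?_
  push_cast
  ring

lemma gg_summable : Summable gg := by
  refine Summable.of_abs (Summable.of_nonneg_of_le (fun k => abs_nonneg _) (fun k => ?_) ff_summable)
  unfold gg ff
  have hc : (1:ℝ) ≤ (Nat.choose (2*(k+1)) (k+1) : ℝ) := by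
    exact_mod_cast Nat.one_le_iff_ne_zero.mpr (Nat.choose_pos (show k+1 ≤ 2*(k+1) by omega)).ne'
  have hk : (0:ℝ) < ((k:ℝ)+1)^3 := by positivity
  rw [abs_div, abs_pow, abs_neg, abs_one, one_pow, abs_of_pos (by nlinarith)]
  rw [div_le_div_iff₀ (by nlinarith) hk]
  nlinarith

theorem stmt_10 :
    ∑' n : ℕ, (1 : ℝ) / ((n : ℝ) + 1) ^ 3 =
      5 / 2 * ∑' k : ℕ, (-1 : ℝ) ^ k /
        (((k : ℝ) + 1) ^ 3 * (Nat.choose (2 * (k + 1)) (k + 1) : ℝ)) := by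
  have hf := ff_summable.hasSum.tendsto_sum_nat
  have hg := gg_summable.hasSum.tendsto_sum_nat
  have hR : Filter.Tendsto RS Filter.atTop (nhds 0) := by
    refine squeeze_zero_norm (fun n => ?_) tendsto_one_div_add_atTop_nhds_zero_nat
    rw [Real.norm_eq_abs]
    exact RS_bound n
  have key : Filter.Tendsto (fun N => ∑ i ∈ Finset.range N, ff i - 5/2 * ∑ i ∈ Finset.range N, gg i)
      Filter.atTop (nhds ((∑' n, ff n) - 5/2 * ∑' k, gg k)) := hf.sub (hg.const_mul (5/2))
  have heq : (fun N => ∑ i ∈ Finset.range N, ff i - 5/2 * ∑ i ∈ Finset.range N, gg i) = RS := by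
    funext N
    rw [mainFin N]
    ring
  rw [heq] at key
  have := tendsto_nhds_unique key hR
  have hfin : (∑' n, ff n) = 5/2 * ∑' k, gg k := by linarith
  exact hfin
end

section
/- (Koecher–Leshchiner generating function) For real x with |x| < 1, ∑_{k=1}^{∞} 1/(k(k^2−x^2)) = (1/2) ∑_{k=1}^{∞} ((-1)^{k-1}/(k^3 binom(2k,k))) · ((5k^2−x^2)/(k^2−x^2)) · ∏_{m=1}^{k-1} (1 − x^2/m^2). -/
open Finset
set_option maxHeartbeats 1000000
namespace K12X

noncomputable def aa (y : ℝ) (k : ℕ) : ℝ := ∏ m ∈ Finset.Icc 1 k, ((m : ℝ) ^ 2 - y)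

noncomputable def ep (y : ℝ) (n k : ℕ) : ℝ :=
  aa y k * (Nat.factorial (n - k) : ℝ) /
    (2 * (k : ℝ) * ((k : ℝ) ^ 2 - y) * (Nat.factorial (n + k) : ℝ))

noncomputable def ps (y : ℝ) (n K : ℕ) : ℝ :=
  aa y K * (Nat.factorial (n - K - 1) : ℝ) /
    ((Nat.factorial (n + K) : ℝ) * ((n : ℝ) ^ 2 - y))

noncomputable def th (y : ℝ) (n : ℕ) : ℝ := (-1) ^ (n - 1) * (ep y n n + ps y n (n - 1))

lemma aa_succ (y : ℝ) (k : ℕ) : aa y (k + 1) = aa y k * (((k : ℝ) + 1) ^ 2 - y) := by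
  rw [aa, aa, Finset.prod_Icc_succ_top (Nat.succ_le_succ (Nat.zero_le k))]
  push_cast; ring

lemma sq_sub_pos {y : ℝ} (hy1 : y < 1) {k : ℕ} (hk : 1 ≤ k) : 0 < (k : ℝ) ^ 2 - y := by
  have : (1 : ℝ) ≤ (k : ℝ) := by exact_mod_cast hk
  nlinarith


lemma key (A F G K c d u v : ℝ) (hK : K ≠ 0) (hc : c ≠ 0) (hG : G ≠ 0) (hd0 : d ≠ 0)
    (hv0 : v ≠ 0) (hd : d = c + u * v) (hv : v = u + 2 * K) :
    A * c * (u * F) / (2 * K * c * (v * G)) - A * c * F / (2 * K * c * G)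
      + A * c * F / (v * G * d) + A * (u * F) / (G * d) = 0 := by
  field_simp
  ring_nf
  rw [hd, hv]
  ring

lemma aa_pos {y : ℝ} (hy1 : y < 1) (k : ℕ) : 0 < aa y k := by
  refine Finset.prod_pos (fun m hm => ?_)
  exact sq_sub_pos hy1 (Finset.mem_Icc.mp hm).1

lemma aa_le {y : ℝ} (hy0 : 0 ≤ y) (hy1 : y < 1) (k : ℕ) :
    aa y k ≤ ((Nat.factorial k : ℝ)) ^ 2 := by
  induction k with
  | zero => simp [aa]
  | succ n ih =>
      rw [aa_succ, Nat.factorial_succ]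
      push_cast
      have h1 : (0:ℝ) < aa y n := aa_pos hy1 n
      have h2 : ((n:ℝ) + 1) ^ 2 - y ≤ ((n:ℝ)+1)^2 := by linarith
      have h3 : (0:ℝ) < ((n:ℝ)+1)^2 - y := by
        have := sq_sub_pos hy1 (Nat.succ_le_succ (Nat.zero_le n)); push_cast at this; linarith
      have h4 : (1:ℝ) ≤ (Nat.factorial n : ℝ) ^ 2 := by
        have h5 := Nat.one_le_iff_ne_zero.mpr (Nat.factorial_ne_zero n)
        have h6 : (1:ℝ) ≤ (Nat.factorial n : ℝ) := by exact_mod_cast h5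
        nlinarith
      nlinarith

lemma step {y : ℝ} (hy1 : y < 1) (i j : ℕ) :
    ep y (i + j + 2) (i + 1) - ep y (i + j + 1) (i + 1)
      + ps y (i + j + 2) (i + 1) + ps y (i + j + 2) i = 0 := by
  have e1 : i + j + 2 - (i + 1) = j + 1 := by omega
  have e2 : i + j + 1 - (i + 1) = j := by omega
  have e3 : j + 1 - 1 = j := by omega
  have e4 : i + j + 2 - i - 1 = j + 1 := by omega
  have e5 : i + j + 2 + (i + 1) = (2 * i + j + 2) + 1 := by omega
  have e6 : i + j + 1 + (i + 1) = 2 * i + j + 2 := by omega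
  have e7 : i + j + 2 + i = 2 * i + j + 2 := by omega
  rw [ep, ep, ps, ps, e1, e2, e3, e4, e5, e6, e7, aa_succ]
  have hc : (0:ℝ) < ((i:ℝ) + 1) ^ 2 - y := by
    have := sq_sub_pos hy1 (Nat.succ_le_succ (Nat.zero_le i)); push_cast at this; linarith
  have hn : (0:ℝ) < ((i + j + 2 : ℕ) : ℝ) ^ 2 - y := sq_sub_pos hy1 (by omega)
  have hG : ((Nat.factorial (2 * i + j + 2) : ℝ)) ≠ 0 := by
    exact_mod_cast Nat.factorial_ne_zero _
  rw [Nat.factorial_succ (2 * i + j + 2), Nat.factorial_succ j]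
  have h := key (aa y i) (Nat.factorial j : ℝ) (Nat.factorial (2 * i + j + 2) : ℝ)
      ((i : ℝ) + 1) (((i:ℝ) + 1) ^ 2 - y) (((i + j + 2 : ℕ) : ℝ) ^ 2 - y)
      ((j : ℝ) + 1) ((2 * i + j + 2 : ℕ) + 1 : ℝ)
      (by positivity) (ne_of_gt hc) hG (ne_of_gt hn) (by positivity)
      (by push_cast; ring) (by push_cast; ring)
  push_cast at h ⊢
  linarith [h]

lemma ps_zero {y : ℝ} (hy1 : y < 1) (n : ℕ) :
    ps y (n + 1) 0 = 1 / (((n : ℝ) + 1) * (((n : ℝ) + 1) ^ 2 - y)) := by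
  have hd : (0:ℝ) < ((n + 1 : ℕ) : ℝ) ^ 2 - y := sq_sub_pos hy1 (by omega)
  rw [ps]
  simp only [Nat.add_sub_cancel, Nat.add_zero]
  rw [show aa y 0 = 1 by simp [aa], Nat.factorial_succ n]
  have hf : ((Nat.factorial n : ℝ)) ≠ 0 := by exact_mod_cast Nat.factorial_ne_zero _
  push_cast at hd ⊢
  field_simp

lemma sumA {y : ℝ} (hy1 : y < 1) (n m : ℕ) (h : m + 1 ≤ n) :
    ∑ k ∈ Finset.range m, (-1 : ℝ) ^ k * (ep y n (k + 1) - ep y (n - 1) (k + 1))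
      = (-1) ^ m * ps y n m - ps y n 0 := by
  induction m with
  | zero => simp
  | succ m ih =>
      have h' : m + 1 ≤ n := by omega
      rw [Finset.sum_range_succ, ih h']
      obtain ⟨j, rfl⟩ : ∃ j, n = m + j + 2 := ⟨n - m - 2, by omega⟩
      have hstep := step hy1 m j
      have hn1 : m + j + 2 - 1 = m + j + 1 := by omega
      rw [hn1]
      have : ep y (m + j + 2) (m + 1) - ep y (m + j + 1) (m + 1)
          = -(ps y (m + j + 2) (m + 1) + ps y (m + j + 2) m) := by linarith
      rw [this]
      rw [pow_succ]
      ring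

lemma main {y : ℝ} (hy1 : y < 1) (N : ℕ) :
    ∑ k ∈ Finset.range N, (1 / (((k : ℝ) + 1) * (((k : ℝ) + 1) ^ 2 - y)))
      + ∑ k ∈ Finset.range N, (-1 : ℝ) ^ k * ep y N (k + 1)
      = ∑ k ∈ Finset.range N, th y (k + 1) := by
  induction N with
  | zero => simp
  | succ N ih =>
      rw [Finset.sum_range_succ, Finset.sum_range_succ, Finset.sum_range_succ]
      have hsplit : ∑ k ∈ Finset.range N, (-1 : ℝ) ^ k * ep y (N + 1) (k + 1)
          = ∑ k ∈ Finset.range N, (-1 : ℝ) ^ k * (ep y (N + 1) (k + 1) - ep y N (k + 1))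
            + ∑ k ∈ Finset.range N, (-1 : ℝ) ^ k * ep y N (k + 1) := by
        rw [← Finset.sum_add_distrib]
        exact Finset.sum_congr rfl (fun k _ => by ring)
      have hA := sumA hy1 (N + 1) N (by omega)
      rw [Nat.add_sub_cancel] at hA
      have hps0 := ps_zero hy1 N
      have hth : th y (N + 1) = (-1) ^ N * (ep y (N + 1) (N + 1) + ps y (N + 1) N) := by
        rw [th, Nat.add_sub_cancel]
      rw [hsplit, hA, hth, hps0]
      push_cast
      linarith [ih]

lemma c2nat : ∀ (k N : ℕ), 1 ≤ k → N + 1 ≤ (N + k).choose k := by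
  intro k
  induction k with
  | zero => intro N h; omega
  | succ k ih =>
      intro N _
      rcases Nat.eq_zero_or_pos k with hk | hk
      · subst hk; simp
      · have h1 := ih N hk
        have h2 : (N + (k + 1)).choose (k + 1) = (N + k).choose k + (N + k).choose (k + 1) := by
          rw [show N + (k + 1) = (N + k) + 1 by omega]
          exact Nat.choose_succ_succ (N + k) k
        omega

lemma c1nat : ∀ (N k : ℕ), 1 ≤ k → k + 1 ≤ N → N ≤ N.choose k := by
  intro N
  induction N with
  | zero => intro k h1 h2; omega
  | succ N ih =>
      intro k hk hkN
      rcases Nat.eq_or_lt_of_le hk with h1 | h1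
      · rw [← h1, Nat.choose_one_right]
      · have hk2 : 2 ≤ k := h1
        have hpas := Nat.choose_succ_succ N (k - 1)
        simp only [Nat.succ_eq_add_one] at hpas
        rw [show k - 1 + 1 = k from by omega] at hpas
        have h3 : N ≤ N.choose (k - 1) := ih (k - 1) (by omega) (by omega)
        have h4 : 1 ≤ N.choose k := Nat.choose_pos (by omega)
        omega

lemma cdouble (N : ℕ) : 2 * (2 * N).choose N ≤ (2 * N + 2).choose (N + 1) := by
  have h1 : (2 * N + 2).choose (N + 1) = (2 * N + 1).choose N + (2 * N + 1).choose (N + 1) :=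
    Nat.choose_succ_succ (2 * N + 1) N
  have h2 : (2 * N + 1).choose (N + 1) = (2 * N).choose N + (2 * N).choose (N + 1) :=
    Nat.choose_succ_succ (2 * N) N
  have h3 : (2 * N).choose N ≤ (2 * N + 1).choose N := Nat.choose_mono N (Nat.le_succ (2 * N))
  omega

lemma c4nat : ∀ (N : ℕ), 2 ^ N ≤ (2 * N).choose N := by
  intro N
  induction N with
  | zero => simp
  | succ N ih =>
      have hd := cdouble N
      rw [show 2 * N + 2 = 2 * (N + 1) by omega] at hd
      calc 2 ^ (N + 1) = 2 * 2 ^ N := by ring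
        _ ≤ 2 * (2 * N).choose N := by omega
        _ ≤ _ := hd

lemma c3nat : ∀ (N : ℕ), 1 ≤ N → N * (N + 1) ≤ (2 * N).choose N := by
  intro N
  induction N with
  | zero => omega
  | succ N ih =>
      intro _
      rcases Nat.eq_zero_or_pos N with h | h
      · subst h; decide
      · rcases Nat.eq_or_lt_of_le h with h1 | h1
        · rw [← h1]; decide
        · have hN2 : 2 ≤ N := h1
          have hd := cdouble N
          rw [show 2 * N + 2 = 2 * (N + 1) by omega] at hd
          have h3 := ih h
          have h5 : (N + 1) * (N + 1 + 1) ≤ 2 * (N * (N + 1)) := by nlinarith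
          omega

lemma ccnat (N k : ℕ) (h1 : 1 ≤ k) (h2 : k ≤ N) :
    N * (N + 1) ≤ N.choose k * (N + k).choose k := by
  rcases Nat.eq_or_lt_of_le h2 with h | h
  · subst h
    rw [Nat.choose_self, show k + k = 2 * k by omega]
    have := c3nat k h1
    omega
  · have hc1 := c1nat N k h1 (by omega)
    have hc2 := c2nat k N h1
    exact Nat.mul_le_mul hc1 hc2

lemma fact_ratio (N k : ℕ) (hk : k ≤ N) :
    ((N + k).factorial : ℝ)
      = (N.choose k : ℝ) * ((N + k).choose k : ℝ) * (k.factorial : ℝ) ^ 2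
        * ((N - k).factorial : ℝ) := by
  have h1 := Nat.choose_mul_factorial_mul_factorial hk
  have h2 := Nat.choose_mul_factorial_mul_factorial (show k ≤ N + k by omega)
  rw [show N + k - k = N by omega] at h2
  have : (N + k).factorial = N.choose k * (N + k).choose k * k.factorial ^ 2
      * (N - k).factorial := by
    calc (N + k).factorial = (N + k).choose k * k.factorial * N.factorial := h2.symm
      _ = (N + k).choose k * k.factorial * (N.choose k * k.factorial * (N - k).factorial) := by
          rw [h1]
      _ = _ := by ring
  exact_mod_cast this

lemma ep_nonneg {y : ℝ} (hy1 : y < 1) (N k : ℕ) (h1 : 1 ≤ k) : 0 ≤ ep y N k := by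
  have := aa_pos hy1 k
  have hc := sq_sub_pos hy1 h1
  have h2 : (1:ℝ) ≤ (k:ℝ) := by exact_mod_cast h1
  have hf : (0:ℝ) < (Nat.factorial (N - k) : ℝ) := by exact_mod_cast Nat.factorial_pos _
  have hg : (0:ℝ) < (Nat.factorial (N + k) : ℝ) := by exact_mod_cast Nat.factorial_pos _
  rw [ep]
  positivity

lemma ep_le {y : ℝ} (hy0 : 0 ≤ y) (hy1 : y < 1) (N k : ℕ) (h1 : 1 ≤ k) (h2 : k ≤ N) :
    ep y N k ≤ 1 / (2 * (1 - y)) * (1 / ((N : ℝ) * ((N : ℝ) + 1))) := by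
  have hk1 : (1:ℝ) ≤ (k:ℝ) := by exact_mod_cast h1
  have hN1 : (1:ℝ) ≤ (N:ℝ) := by exact_mod_cast (le_trans h1 h2)
  have hc : (0:ℝ) < (k:ℝ)^2 - y := sq_sub_pos hy1 h1
  have hcge : (1:ℝ) - y ≤ (k:ℝ)^2 - y := by nlinarith
  have haa := aa_le hy0 hy1 k
  have haapos := aa_pos hy1 k
  have hCC : ((N:ℝ) * ((N:ℝ) + 1)) ≤ (N.choose k : ℝ) * ((N + k).choose k : ℝ) := by
    have := ccnat N k h1 h2
    have h' : ((N * (N + 1) : ℕ) : ℝ) ≤ ((N.choose k * (N + k).choose k : ℕ) : ℝ) := by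
      exact_mod_cast this
    push_cast at h'
    convert h' using 1 <;> push_cast <;> ring
  have hb : (0:ℝ) < 2 * (k:ℝ) * ((k:ℝ)^2 - y) * (Nat.factorial (N + k) : ℝ) := by
    have : (0:ℝ) < (Nat.factorial (N + k) : ℝ) := by exact_mod_cast Nat.factorial_pos _
    positivity
  have hd : (0:ℝ) < 2 * (1 - y) * ((N:ℝ) * ((N:ℝ) + 1)) := by
    have h0 : (0:ℝ) < 1 - y := by linarith
    have hN0 : (0:ℝ) < (N:ℝ) * ((N:ℝ) + 1) := by nlinarith
    positivity
  rw [ep, div_le_iff₀ hb]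
  have hrw : (1 : ℝ) / (2 * (1 - y)) * (1 / ((N : ℝ) * ((N : ℝ) + 1)))
      = 1 / (2 * (1 - y) * ((N:ℝ) * ((N:ℝ) + 1))) := by
    field_simp
  rw [hrw, div_mul_eq_mul_div, le_div_iff₀ hd, fact_ratio N k h2]
  have hm : (0:ℝ) < (Nat.factorial (N - k) : ℝ) := by exact_mod_cast Nat.factorial_pos _
  have hfk : (0:ℝ) < (Nat.factorial k : ℝ) := by exact_mod_cast Nat.factorial_pos _
  have hchoosepos : (0:ℝ) < (N.choose k : ℝ) * ((N + k).choose k : ℝ) := by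
    have := Nat.choose_pos h2
    have := Nat.choose_pos (show k ≤ N + k by omega)
    positivity
  have s1 : (1 - y) * ((N:ℝ) * ((N:ℝ) + 1)) ≤ ((k:ℝ)^2 - y) * ((N.choose k : ℝ) * ((N + k).choose k : ℝ)) := by
    apply mul_le_mul hcge hCC (by nlinarith) (le_of_lt hc)
  have s2 : aa y k * (Nat.factorial (N - k) : ℝ) ≤ (Nat.factorial k : ℝ)^2 * (Nat.factorial (N - k) : ℝ) :=
    mul_le_mul_of_nonneg_right haa (le_of_lt hm)
  nlinarith [mul_le_mul s2 s1 (by nlinarith) (by positivity),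
    mul_nonneg (mul_nonneg (le_of_lt hfk) (le_of_lt hfk))
      (mul_nonneg (le_of_lt hm) (mul_nonneg (le_of_lt hc) (le_of_lt hchoosepos)))]

lemma Ebound {y : ℝ} (hy0 : 0 ≤ y) (hy1 : y < 1) (N : ℕ) :
    |∑ k ∈ Finset.range N, (-1 : ℝ) ^ k * ep y N (k + 1)|
      ≤ 1 / (2 * (1 - y)) * (1 / ((N : ℝ) + 1)) := by
  have h0 : (0:ℝ) < 1 - y := by linarith
  rcases Nat.eq_zero_or_pos N with h | hN
  · subst h
    simp only [Finset.range_zero, Finset.sum_empty, abs_zero, Nat.cast_zero, zero_add, div_one]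
    positivity
  have hN1 : (1:ℝ) ≤ (N:ℝ) := by exact_mod_cast hN
  calc |∑ k ∈ Finset.range N, (-1 : ℝ) ^ k * ep y N (k + 1)|
      ≤ ∑ k ∈ Finset.range N, |(-1 : ℝ) ^ k * ep y N (k + 1)| :=
        Finset.abs_sum_le_sum_abs _ _
    _ = ∑ k ∈ Finset.range N, ep y N (k + 1) := by
        refine Finset.sum_congr rfl (fun k _ => ?_)
        rw [abs_mul, abs_pow, abs_neg, abs_one, one_pow, one_mul,
          abs_of_nonneg (ep_nonneg hy1 N (k+1) (by omega))]
    _ ≤ ∑ k ∈ Finset.range N, (1 / (2 * (1 - y)) * (1 / ((N : ℝ) * ((N : ℝ) + 1)))) := by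
        refine Finset.sum_le_sum (fun k hk => ?_)
        exact ep_le hy0 hy1 N (k + 1) (by omega) (by
          have := Finset.mem_range.mp hk; omega)
    _ = (N : ℝ) * (1 / (2 * (1 - y)) * (1 / ((N : ℝ) * ((N : ℝ) + 1)))) := by
        rw [Finset.sum_const, Finset.card_range]; simp
    _ ≤ 1 / (2 * (1 - y)) * (1 / ((N : ℝ) + 1)) := by
        rw [mul_comm]
        have hx : (0:ℝ) < (N:ℝ) := by linarith
        have : (1 / ((N : ℝ) * ((N : ℝ) + 1))) * (N:ℝ) = 1 / ((N:ℝ) + 1) := by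
          field_simp
        rw [mul_assoc, this]

lemma Etendsto {y : ℝ} (hy0 : 0 ≤ y) (hy1 : y < 1) :
    Filter.Tendsto (fun N => ∑ k ∈ Finset.range N, (-1 : ℝ) ^ k * ep y N (k + 1))
      Filter.atTop (nhds 0) := by
  apply squeeze_zero_norm (fun N => Ebound hy0 hy1 N)
  have h1 : Filter.Tendsto (fun N : ℕ => 1 / ((N:ℝ) + 1)) Filter.atTop (nhds 0) :=
    tendsto_one_div_add_atTop_nhds_zero_nat
  have := h1.const_mul (1 / (2 * (1 - y)))
  simpa using this

lemma fact2_cast (k : ℕ) :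
    ((2 * k).factorial : ℝ) = ((2 * k).choose k : ℝ) * (k.factorial : ℝ) ^ 2 := by
  have h := Nat.choose_mul_factorial_mul_factorial (show k ≤ 2 * k by omega)
  rw [show 2 * k - k = k by omega] at h
  have : (2 * k).factorial = (2 * k).choose k * k.factorial ^ 2 := by
    rw [← h]; ring
  exact_mod_cast this

lemma choose_ge_pow (k : ℕ) : (2:ℝ) ^ k ≤ ((2 * k).choose k : ℝ) := by
  exact_mod_cast c4nat k

lemma th_abs_le {y : ℝ} (hy0 : 0 ≤ y) (hy1 : y < 1) (k : ℕ) :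
    |th y (k + 1)| ≤ (2 / (1 - y)) * (1 / 2) ^ k := by
  have h0 : (0:ℝ) < 1 - y := by linarith
  have hK : (0:ℝ) < (k:ℝ) + 1 := by positivity
  have hc : (0:ℝ) < ((k+1:ℕ):ℝ)^2 - y := sq_sub_pos hy1 (by omega)
  have hfk : (0:ℝ) < (Nat.factorial k : ℝ) := by exact_mod_cast Nat.factorial_pos _
  have hfk1 : (0:ℝ) < (Nat.factorial (k+1) : ℝ) := by exact_mod_cast Nat.factorial_pos _
  have hf21 : (0:ℝ) < (Nat.factorial (2*k+1) : ℝ) := by exact_mod_cast Nat.factorial_pos _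
  have hf22 : (0:ℝ) < (Nat.factorial (2*k+2) : ℝ) := by exact_mod_cast Nat.factorial_pos _
  have hth : th y (k + 1) = (-1)^k * (ep y (k+1) (k+1) + ps y (k+1) k) := by
    rw [th, Nat.add_sub_cancel]
  have hepnn : 0 ≤ ep y (k+1) (k+1) := ep_nonneg hy1 _ _ (by omega)
  have hpsnn : 0 ≤ ps y (k+1) k := by
    rw [ps]
    have := aa_pos hy1 k
    positivity
  rw [hth, abs_mul, abs_pow, abs_neg, abs_one, one_pow, one_mul,
    abs_of_nonneg (by linarith : (0:ℝ) ≤ ep y (k+1) (k+1) + ps y (k+1) k)]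
  -- bound ep
  have hep : ep y (k+1) (k+1) ≤ (1/(1-y)) * (1/2)^k := by
    rw [ep, Nat.sub_self, Nat.factorial_zero, show (k+1)+(k+1) = 2*(k+1) by omega]
    have haa : aa y (k+1) ≤ (Nat.factorial (k+1) : ℝ)^2 := aa_le hy0 hy1 (k+1)
    have hub : (0:ℝ) < 2 * ((k+1:ℕ):ℝ) * (((k+1:ℕ):ℝ)^2 - y) * ((2*(k+1)).factorial : ℝ) := by
      have : (0:ℝ) < ((2*(k+1)).factorial : ℝ) := by exact_mod_cast Nat.factorial_pos _
      have hK' : (0:ℝ) < ((k+1:ℕ):ℝ) := by exact_mod_cast Nat.succ_pos k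
      positivity
    rw [Nat.cast_one, mul_one, div_le_iff₀ hub]
    have hch : (2:ℝ)^(k+1) ≤ ((2*(k+1)).choose (k+1) : ℝ) := choose_ge_pow (k+1)
    rw [fact2_cast (k+1)]
    -- goal: aa y (k+1) ≤ 1/(1-y)*(1/2)^k * (2*(k+1)*((k+1)^2-y)*(choose * fact^2))
    have hKcast : (1:ℝ) ≤ ((k+1:ℕ):ℝ) := by exact_mod_cast Nat.succ_le_succ (Nat.zero_le k)
    have hcge : (1:ℝ) - y ≤ ((k+1:ℕ):ℝ)^2 - y := by nlinarith
    have e1 : (1:ℝ)/(1-y) * (1/2)^k * (2 * ((k+1:ℕ):ℝ) * (((k+1:ℕ):ℝ)^2 - y)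
        * (((2*(k+1)).choose (k+1) : ℝ) * (Nat.factorial (k+1) : ℝ)^2))
        ≥ (1:ℝ)/(1-y) * (1/2)^k * (2 * 1 * (1 - y) * ((2:ℝ)^(k+1) * (Nat.factorial (k+1) : ℝ)^2)) := by
      have h2 : (0:ℝ) < (1:ℝ)/(1-y) * (1/2)^k := by positivity
      apply mul_le_mul_of_nonneg_left _ (le_of_lt h2)
      have : (2:ℝ) * 1 * (1 - y) ≤ 2 * ((k+1:ℕ):ℝ) * (((k+1:ℕ):ℝ)^2 - y) := by nlinarith
      apply mul_le_mul this (by nlinarith [sq_nonneg (Nat.factorial (k+1) : ℝ)]) (by positivity) (by positivity)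
    have e2 : (1:ℝ)/(1-y) * (1/2)^k * (2 * 1 * (1 - y) * ((2:ℝ)^(k+1) * (Nat.factorial (k+1) : ℝ)^2))
        = 4 * (Nat.factorial (k+1) : ℝ)^2 := by
      have : (2:ℝ)^(k+1) = 2 * 2^k := by ring
      rw [this]
      have h2k : (2:ℝ)^k * (1/2)^k = 1 := by
        rw [← mul_pow]; norm_num
      field_simp
      linear_combination 4 * h2k
    calc aa y (k+1) ≤ (Nat.factorial (k+1) : ℝ)^2 := haa
      _ ≤ 4 * (Nat.factorial (k+1) : ℝ)^2 := by nlinarith [sq_nonneg (Nat.factorial (k+1) : ℝ)]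
      _ = _ := e2.symm
      _ ≤ _ := e1
  -- bound ps
  have hps : ps y (k+1) k ≤ (1/(1-y)) * (1/2)^k := by
    rw [ps, show (k+1) - k - 1 = 0 by omega, Nat.factorial_zero, show (k+1)+k = 2*k+1 by omega]
    have haa : aa y k ≤ (Nat.factorial k : ℝ)^2 := aa_le hy0 hy1 k
    have hc' : (0:ℝ) < ((k+1:ℕ):ℝ)^2 - y := hc
    have hub : (0:ℝ) < ((2*k+1).factorial : ℝ) * (((k+1:ℕ):ℝ)^2 - y) := by positivity
    rw [Nat.cast_one, mul_one, div_le_iff₀ hub]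
    have hge : ((2*k).factorial : ℝ) ≤ ((2*k+1).factorial : ℝ) := by
      exact_mod_cast Nat.factorial_le (by omega)
    have hch : (2:ℝ)^k ≤ ((2*k).choose k : ℝ) := choose_ge_pow k
    have hcge : (1:ℝ) - y ≤ ((k+1:ℕ):ℝ)^2 - y := by
      have : (1:ℝ) ≤ ((k+1:ℕ):ℝ) := by exact_mod_cast Nat.succ_le_succ (Nat.zero_le k)
      nlinarith
    have key : (1:ℝ)/(1-y) * (1/2)^k * (((2*k+1).factorial : ℝ) * (((k+1:ℕ):ℝ)^2 - y))
      ≥ (1:ℝ)/(1-y) * (1/2)^k * (((2*k).factorial : ℝ) * (1 - y)) := by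
      have h2 : (0:ℝ) < (1:ℝ)/(1-y) * (1/2)^k := by positivity
      apply mul_le_mul_of_nonneg_left _ (le_of_lt h2)
      apply mul_le_mul hge hcge (by linarith) (by positivity)
    have key2 : (1:ℝ)/(1-y) * (1/2)^k * (((2*k).factorial : ℝ) * (1 - y))
      = (1/2)^k * ((2*k).factorial : ℝ) := by
      field_simp
    have key3 : aa y k ≤ (1/2)^k * ((2*k).factorial : ℝ) := by
      rw [fact2_cast k]
      calc aa y k ≤ (Nat.factorial k : ℝ)^2 := haa
      _ = 1 * (Nat.factorial k : ℝ)^2 := by ring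
      _ ≤ (1/2)^k * (((2*k).choose k : ℝ) * (Nat.factorial k : ℝ)^2) := by
        rw [← mul_assoc]
        apply mul_le_mul_of_nonneg_right _ (by positivity)
        have h2k : ((1:ℝ)/2)^k * (2:ℝ)^k = 1 := by
          rw [← mul_pow]; norm_num
        nlinarith [hch, pow_pos (show (0:ℝ) < 1/2 by norm_num) k]
      _ = _ := by ring
    calc aa y k ≤ (1/2)^k * ((2*k).factorial : ℝ) := key3
      _ = (1:ℝ)/(1-y) * (1/2)^k * (((2*k).factorial : ℝ) * (1 - y)) := key2.symm
      _ ≤ _ := key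
  calc ep y (k+1) (k+1) + ps y (k+1) k ≤ (1/(1-y)) * (1/2)^k + (1/(1-y)) * (1/2)^k := by
        linarith
    _ = (2/(1-y)) * (1/2)^k := by ring

lemma prod_eq (y : ℝ) (k : ℕ) :
    (∏ m ∈ Finset.Icc 1 k, (1 - y / (m : ℝ) ^ 2)) * ((Nat.factorial k : ℝ)) ^ 2 = aa y k := by
  induction k with
  | zero => simp [aa]
  | succ n ih =>
      rw [Finset.prod_Icc_succ_top (Nat.succ_le_succ (Nat.zero_le n)), aa_succ,
        Nat.factorial_succ, ← ih]
      have hn : ((n:ℝ) + 1) ≠ 0 := by positivity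
      push_cast
      field_simp

lemma geq {y : ℝ} (hy1 : y < 1) (k : ℕ) :
    (-1 : ℝ) ^ k / (((k : ℝ) + 1) ^ 3 * (Nat.choose (2 * (k + 1)) (k + 1) : ℝ)) *
        ((5 * ((k : ℝ) + 1) ^ 2 - y) / (((k : ℝ) + 1) ^ 2 - y)) *
        ∏ m ∈ Finset.Icc 1 k, (1 - y / (m : ℝ) ^ 2)
      = 2 * th y (k + 1) := by
  have hth : th y (k + 1) = (-1)^k * (ep y (k+1) (k+1) + ps y (k+1) k) := by
    rw [th, Nat.add_sub_cancel]
  rw [hth, ep, ps, Nat.sub_self, show (k+1) - k - 1 = 0 by omega, Nat.factorial_zero,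
    show (k+1)+(k+1) = 2*(k+1) by omega, show (k+1)+k = 2*k+1 by omega, aa_succ]
  have hc : (0:ℝ) < ((k:ℝ)+1)^2 - y := by
    have := sq_sub_pos hy1 (show 1 ≤ k+1 by omega); push_cast at this; linarith
  have hch := Nat.choose_mul_factorial_mul_factorial (show k + 1 ≤ 2 * (k+1) by omega)
  rw [show 2 * (k+1) - (k+1) = k + 1 by omega] at hch
  have hchR : ((2 * (k+1)).choose (k+1) : ℝ) * (((k:ℝ)+1) * (Nat.factorial k : ℝ))
        * (((k:ℝ)+1) * (Nat.factorial k : ℝ))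
      = (2*(k:ℝ)+2) * ((2*k+1).factorial : ℝ) := by
    have h1 : ((2 * (k+1)).choose (k+1) : ℝ) * ((k+1).factorial : ℝ) * ((k+1).factorial : ℝ)
        = ((2 * (k+1)).factorial : ℝ) := by exact_mod_cast hch
    rw [show 2 * (k+1) = (2*k+1) + 1 by omega] at h1
    rw [Nat.factorial_succ (2*k+1), Nat.factorial_succ k] at h1
    rw [show 2*k+1+1 = 2*(k+1) by omega] at h1
    push_cast at h1 ⊢
    nlinarith [h1]
  have hprod := prod_eq y k
  have hfkne : (Nat.factorial k : ℝ) ≠ 0 := by exact_mod_cast Nat.factorial_ne_zero _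
  have hf21ne : ((2*k+1).factorial : ℝ) ≠ 0 := by exact_mod_cast Nat.factorial_ne_zero _
  have hKne : ((k:ℝ) + 1) ≠ 0 := by positivity
  have hcne : ((k:ℝ)+1)^2 - y ≠ 0 := ne_of_gt hc
  have hden : (((k:ℝ)+1) * (Nat.factorial k : ℝ)) ^ 2 ≠ 0 := by positivity
  have hchval : ((2 * (k+1)).choose (k+1) : ℝ)
      = ((2*(k:ℝ)+2) * ((2*k+1).factorial : ℝ)) / ((((k:ℝ)+1) * (Nat.factorial k : ℝ)) ^ 2) := by
    rw [eq_div_iff hden]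
    linear_combination hchR
  have hf22 : ((2 * (k+1)).factorial : ℝ) = (2*(k:ℝ)+2) * ((2*k+1).factorial : ℝ) := by
    rw [show 2 * (k+1) = (2*k+1) + 1 by omega, Nat.factorial_succ]
    push_cast; ring
  rw [← hprod, hchval, hf22]
  have h2k2 : (2*(k:ℝ)+2) ≠ 0 := by positivity
  push_cast
  field_simp
  ring

lemma summable_f {y : ℝ} (hy0 : 0 ≤ y) (hy1 : y < 1) :
    Summable (fun k : ℕ => 1 / (((k : ℝ) + 1) * (((k : ℝ) + 1) ^ 2 - y))) := by
  have h0 : (0:ℝ) < 1 - y := by linarith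
  have hmaj : Summable (fun k : ℕ => (1/(1-y)) * (1 / ((k:ℝ)+1)^2)) := by
    apply Summable.mul_left
    have : Summable (fun n : ℕ => 1 / ((n:ℝ))^2) := by
      rw [Real.summable_one_div_nat_pow]
      omega
    have h2 := (summable_nat_add_iff 1).mpr this
    apply h2.congr
    intro n; push_cast; ring
  apply Summable.of_nonneg_of_le _ _ hmaj
  · intro k
    have hK : (0:ℝ) < (k:ℝ) + 1 := by positivity
    have hc : (0:ℝ) < ((k:ℝ)+1)^2 - y := by
      have := sq_sub_pos hy1 (show 1 ≤ k+1 by omega); push_cast at this; linarith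
    positivity
  · intro k
    have hK : (1:ℝ) ≤ (k:ℝ) + 1 := by
      have : (0:ℝ) ≤ (k:ℝ) := Nat.cast_nonneg k
      linarith
    have hc : (0:ℝ) < ((k:ℝ)+1)^2 - y := by
      have := sq_sub_pos hy1 (show 1 ≤ k+1 by omega); push_cast at this; linarith
    rw [show (1:ℝ)/(1-y) * (1 / ((k:ℝ)+1)^2) = 1 / ((1-y) * ((k:ℝ)+1)^2) by field_simp]
    rw [div_le_div_iff₀ (by nlinarith) (by nlinarith)]
    have hsq : (1:ℝ) ≤ ((k:ℝ)+1)^2 := by nlinarith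
    have hyK : y ≤ ((k:ℝ)+1)^2 * y := by nlinarith [mul_nonneg (show (0:ℝ) ≤ ((k:ℝ)+1)^2 - 1 by linarith) hy0]
    nlinarith [sq_nonneg ((k:ℝ)+1)]

lemma summable_th {y : ℝ} (hy0 : 0 ≤ y) (hy1 : y < 1) :
    Summable (fun k : ℕ => th y (k + 1)) := by
  apply Summable.of_abs
  apply Summable.of_nonneg_of_le (fun k => abs_nonneg _) (fun k => th_abs_le hy0 hy1 k)
  apply Summable.mul_left
  exact summable_geometric_of_lt_one (by norm_num) (by norm_num)

end K12X

theorem stmt_12 (x : ℝ) (hx : |x| < 1) :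
    ∑' k : ℕ, 1 / (((k : ℝ) + 1) * (((k : ℝ) + 1) ^ 2 - x ^ 2)) =
      1 / 2 * ∑' k : ℕ,
        (-1 : ℝ) ^ k / (((k : ℝ) + 1) ^ 3 * (Nat.choose (2 * (k + 1)) (k + 1) : ℝ)) *
          ((5 * ((k : ℝ) + 1) ^ 2 - x ^ 2) / (((k : ℝ) + 1) ^ 2 - x ^ 2)) *
          ∏ m ∈ Finset.Icc 1 k, (1 - x ^ 2 / (m : ℝ) ^ 2) := by
  open K12X in
  have hy0 : (0:ℝ) ≤ x ^ 2 := sq_nonneg x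
  have hy1 : x ^ 2 < 1 := by
    rw [abs_lt] at hx
    nlinarith
  set y := x ^ 2 with hy
  have hfs := summable_f hy0 hy1
  have hts := summable_th hy0 hy1
  have h1 := hfs.hasSum.tendsto_sum_nat
  have h2 := hts.hasSum.tendsto_sum_nat
  have h3 : (fun N => ∑ k ∈ Finset.range N, (-1:ℝ)^k * ep y N (k+1))
      = fun N => (∑ k ∈ Finset.range N, th y (k+1))
          - (∑ k ∈ Finset.range N, 1 / (((k : ℝ) + 1) * (((k : ℝ) + 1) ^ 2 - y))) := by
    funext N
    have := main hy1 N
    linarith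
  have h4 := h2.sub h1
  rw [← h3] at h4
  have h5 := Etendsto hy0 hy1
  have h6 : (∑' k : ℕ, th y (k+1)) - (∑' k : ℕ, 1 / (((k : ℝ) + 1) * (((k : ℝ) + 1) ^ 2 - y))) = 0 :=
    tendsto_nhds_unique h4 h5
  have h7 : ∑' k : ℕ, ((-1 : ℝ) ^ k / (((k : ℝ) + 1) ^ 3 * (Nat.choose (2 * (k + 1)) (k + 1) : ℝ)) *
          ((5 * ((k : ℝ) + 1) ^ 2 - y) / (((k : ℝ) + 1) ^ 2 - y)) *
          ∏ m ∈ Finset.Icc 1 k, (1 - y / (m : ℝ) ^ 2))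
      = ∑' k : ℕ, 2 * th y (k+1) := tsum_congr (fun k => geq hy1 k)
  rw [h7, tsum_mul_left]
  linarith
end

section
/- (Telescoping identity over n) For integers n ≥ 1 and s ≥ 0, one has ∑_{k=1}^{n-1} (-1)^k q^{-C(n-k+1,2)} ([k-1]_q!)^2 (∏_{j=n-k}^{n+k}[j]_q)^{-1} ([n]_q^2 H_{q,k-1}({2}^s) + q^n H_{q,k-1}({2}^{s-1})) = (-1)^{n-1}(1+q^n) H_{q,n-1}({2}^s) / ([n]_q qbinom(2n,n)) − q^{-C(n,2)} H_{q,0}({2}^s) / [n]_q. -/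
open Finset

/-- `H_{q,k}({2}^s)` extended to integer `s`, vanishing for negative `s`. -/
noncomputable def qHz (q : ℝ) (k : ℕ) (s : ℤ) : ℝ :=
  if s < 0 then 0 else qH q k s.toNat

lemma qH_zero (q : ℝ) (k : ℕ) : qH q k 0 = 1 := by
  simp [qH]

lemma qH_succ (q : ℝ) (k s : ℕ) :
    qH q (k+1) s = qH q k s + q^(k+1)/(qint q (k+1))^2 * qHz q k ((s:ℤ)-1) := by
  cases s with
  | zero => simp [qH_zero, qHz]
  | succ s =>
      have hz : qHz q k (((s+1:ℕ):ℤ) - 1) = qH q k s := by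
        simp [qHz]
      have hnot : (k+1) ∉ Finset.Icc 1 k := by simp
      have hIcc : Finset.Icc 1 (k+1) = insert (k+1) (Finset.Icc 1 k) := by
        ext x; simp; omega
      have hinj : ∀ A ∈ (Finset.Icc 1 k).powersetCard s, ∀ B ∈ (Finset.Icc 1 k).powersetCard s,
          insert (k+1) A = insert (k+1) B → A = B := by
        intro A hA B hB hAB
        have hA' : (k+1) ∉ A := fun h => hnot ((Finset.mem_powersetCard.mp hA).1 h)
        have hB' : (k+1) ∉ B := fun h => hnot ((Finset.mem_powersetCard.mp hB).1 h)
        have := congrArg (Finset.erase · (k+1)) hAB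
        simpa [Finset.erase_insert hA', Finset.erase_insert hB'] using this
      have hdisj : Disjoint ((Finset.Icc 1 k).powersetCard (s+1))
          (((Finset.Icc 1 k).powersetCard s).image (insert (k+1))) := by
        rw [Finset.disjoint_left]
        intro A hA hA2
        obtain ⟨B, hB, rfl⟩ := Finset.mem_image.mp hA2
        exact hnot ((Finset.mem_powersetCard.mp hA).1 (Finset.mem_insert_self _ _))
      rw [qH, hIcc, powersetCard_succ_insert hnot, Finset.sum_union hdisj, hz]
      congr 1
      rw [Finset.sum_image hinj, qH, Finset.mul_sum]
      refine Finset.sum_congr rfl fun A hA => ?_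
      have hA' : (k+1) ∉ A := fun h => hnot ((Finset.mem_powersetCard.mp hA).1 h)
      rw [Finset.prod_insert hA']


theorem stmt_17 (q : ℝ) (hq : q ≠ 1) (hq0 : q ≠ 0)
    (h0 : ∀ j : ℕ, 1 ≤ j → qint q j ≠ 0) (n s : ℕ) (hn : 1 ≤ n) :
    ∑ k ∈ Finset.Icc 1 (n - 1),
        (-1 : ℝ) ^ k * q ^ (-(Nat.choose (n - k + 1) 2 : ℤ)) * (qfact q (k - 1)) ^ 2 /
            (∏ j ∈ Finset.Icc (n - k) (n + k), qint q j) *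
          ((qint q n) ^ 2 * qH q (k - 1) s + q ^ n * qHz q (k - 1) ((s : ℤ) - 1)) =
      (-1 : ℝ) ^ (n - 1) * (1 + q ^ n) * qH q (n - 1) s / (qint q n * qbinom q (2 * n) n) -
        q ^ (-(Nat.choose n 2 : ℤ)) * qH q 0 s / qint q n := by
  have h1q : (1 : ℝ) - q ≠ 0 := sub_ne_zero_of_ne (Ne.symm hq)
  have hprod : ∀ a b : ℕ, 1 ≤ a → (∏ j ∈ Finset.Icc a b, qint q j) ≠ 0 := fun a b ha =>
    Finset.prod_ne_zero_iff.mpr fun j hj => h0 j (ha.trans (Finset.mem_Icc.mp hj).1)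
  have hqf : ∀ m : ℕ, qfact q m ≠ 0 := fun m => hprod 1 m le_rfl
  set T : ℕ → ℝ := fun k => (-1 : ℝ)^k * q^(-(Nat.choose (n-k) 2 : ℤ)) * (qfact q k)^2 /
      (∏ j ∈ Finset.Icc (n-k) (n+k), qint q j) * qH q k s with hT
  have hIccIco : Finset.Icc 1 (n-1) = Finset.Ico 1 n := by
    rw [← Finset.Ico_add_one_right_eq_Icc]; congr 1; omega
  rw [hIccIco, Finset.sum_Ico_eq_sum_range]
  have hstep : ∀ i ∈ Finset.range (n - 1),
      (-1 : ℝ) ^ (1+i) * q ^ (-(Nat.choose (n - (1+i) + 1) 2 : ℤ)) * (qfact q ((1+i) - 1)) ^ 2 /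
            (∏ j ∈ Finset.Icc (n - (1+i)) (n + (1+i)), qint q j) *
          ((qint q n) ^ 2 * qH q ((1+i) - 1) s + q ^ n * qHz q ((1+i) - 1) ((s : ℤ) - 1))
        = T (i+1) - T i := by
    intro i hi
    rw [Finset.mem_range] at hi
    obtain ⟨a, ha1, rfl⟩ : ∃ a, 1 ≤ a ∧ n = a + i + 1 := ⟨n - i - 1, by omega, by omega⟩
    simp only [hT]
    simp only [show (1+i)-1 = i from by omega, show a+i+1-(1+i) = a from by omega,
      show a+i+1-(1+i)+1 = a+1 from by omega, show a+i+1+(1+i) = (a+2*i+1)+1 from by omega,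
      show (1:ℕ)+i = i+1 from by omega, show i+1-1 = i from rfl, show a+i+1-(i+1) = a from by omega,
      show a+i+1+(i+1) = (a+2*i+1)+1 from by omega, show a+i+1-i = a+1 from by omega,
      show a+i+1+i = a+2*i+1 from by omega]
    rw [Finset.prod_Icc_succ_top (by omega) (qint q)]
    have hbot : Finset.Icc a (a+2*i+1) = insert a (Finset.Icc (a+1) (a+2*i+1)) := by
      rw [← Finset.Ioc_insert_left (by omega), ← Finset.Icc_add_one_left_eq_Ioc]
    rw [hbot, Finset.prod_insert (by simp)]
    rw [qH_succ q i s]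
    have hcq : q ^ (-(Nat.choose (a+1) 2 : ℤ)) = q ^ (-(Nat.choose a 2 : ℤ)) * (q ^ a)⁻¹ := by
      have hch : ((a+1).choose 2 : ℤ) = (a.choose 2 : ℤ) + a := by
        rw [Nat.choose_succ_succ a 1, Nat.choose_one_right]; push_cast; ring
      have : (-((a+1).choose 2 : ℤ)) = (-(a.choose 2 : ℤ)) + (-(a : ℤ)) := by rw [hch]; ring
      rw [this, zpow_add₀ hq0, zpow_neg q (a:ℤ), zpow_natCast]
    rw [hcq]
    have hkey : (qint q (a+i+1))^2 = q^a * (qint q (i+1))^2 + qint q a * qint q (a+2*i+1+1) := by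
      simp only [qint]
      field_simp
      ring
    rw [hkey]
    have hqfs : qfact q (i+1) = qfact q i * qint q (i+1) := by
      rw [qfact, qfact]; exact Finset.prod_Icc_succ_top (by omega) _
    rw [hqfs]
    have hP := hprod (a+1) (a+2*i+1) (by omega)
    have hA := h0 a ha1
    have hB := h0 (a+2*i+1+1) (by omega)
    have hK := h0 (i+1) (by omega)
    field_simp
    ring
  rw [Finset.sum_congr rfl hstep, Finset.sum_range_sub T (n-1)]
  obtain ⟨m, rfl⟩ : ∃ m, n = m + 1 := ⟨n-1, by omega⟩
  simp only [hT, qbinom]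
  simp only [show m+1-1 = m from rfl, Nat.sub_zero, Nat.add_zero, pow_zero,
    show m+1-m = 1 from by omega, show m+1+m = 2*m+1 from by omega,
    show m+1-0 = m+1 from rfl, show m+1+0 = m+1 from rfl,
    show 2*(m+1) = 2*m+1+1 from by omega, show 2*m+1+1-(m+1) = m+1 from by omega,
    show Nat.choose 1 2 = 0 from rfl, Int.natCast_zero, neg_zero, zpow_zero,
    Finset.Icc_self, Finset.prod_singleton]
  have hq00 : qfact q 0 = 1 := by simp [qfact]
  have hfact : (∏ j ∈ Finset.Icc 1 (2*m+1), qint q j) = qfact q (2*m+1) := rfl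
  have hf2 : qfact q (2*m+1+1) = qfact q (2*m+1) * qint q (2*m+1+1) :=
    Finset.prod_Icc_succ_top (by omega) _
  have hfm : qfact q (m+1) = qfact q m * qint q (m+1) :=
    Finset.prod_Icc_succ_top (by omega) _
  have hq2 : qint q (2*m+1+1) = (1+q^(m+1)) * qint q (m+1) := by
    simp only [qint]
    field_simp
    ring
  have hN := h0 (m+1) (by omega)
  have h2N := h0 (2*m+1+1) (by omega)
  rw [hq00, hfact, hf2, hfm, hq2]
  have hF1 := hqf m
  have hF2 := hqf (2*m+1)
  have h1N : (1:ℝ) + q^(m+1) ≠ 0 := by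
    intro h
    apply h2N
    rw [hq2, h, zero_mul]
  field_simp
end
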